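/- arXiv:2402.05103 — 3 statements merged into one kernel-verified Lean document; each statement's English description precedes it below -/
import Mathlib

section
/- Let G be an abelian group and H = {H_α^β | α,β ∈ G} a Hopf G-bialgebra. Then the antipode is an anti-homomorphism with respect to the product: for all α, β, γ ∈ G and all x ∈ H_α^β and y ∈ H_α^γ one has S_α^{β+γ}(xy) = S_α^γ(y) S_α^β(x). -/
open TensorProduct

/-- A Hopf `G`-bialgebra (De Renzi–Martel–Wang), modeled inside an ambient `k`-vector space
`A` containing all the components `H α β`.  The structure operations are given as global
linear maps, and the axioms (H1)–(H9) are required on graded elements. -/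
structure HopfGBialgebra (k : Type*) (G : Type*) [Field k] [AddCommGroup G] where
  /-- ambient vector space -/
  A : Type*
  [addCommGroup : AddCommGroup A]
  [module : Module k A]
  /-- the components `H α β` -/
  H : G → G → Submodule k A
  /-- product `μ` -/
  mul : A →ₗ[k] A →ₗ[k] A
  /-- units `η_α(1) = 1_α` -/
  one : G → A
  /-- coproducts `Δ_{α,β}` -/
  comul : G → G → A →ₗ[k] A ⊗[k] A
  /-- counits `ε^β` -/
  counit : G → A →ₗ[k] k
  /-- antipodes `S_α^β` -/
  S : G → G → A →ₗ[k] A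
  mul_mem : ∀ {α β γ : G} {x y : A}, x ∈ H α β → y ∈ H α γ → mul x y ∈ H α (β + γ)
  one_mem : ∀ α : G, one α ∈ H α 0
  comul_mem : ∀ {α β γ : G} {x : A}, x ∈ H (α + β) γ →
    comul α β x ∈ LinearMap.range (TensorProduct.map (H α γ).subtype (H β γ).subtype)
  S_mem : ∀ {α β : G} {x : A}, x ∈ H α β → S α β x ∈ H (-α) (-β)
  /-- (H1) associativity -/
  mul_assoc' : ∀ {α β γ δ : G} {x y z : A}, x ∈ H α β → y ∈ H α γ → z ∈ H α δ →
    mul (mul x y) z = mul x (mul y z)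
  /-- (H2) unitality -/
  one_mul' : ∀ {α β : G} {x : A}, x ∈ H α β → mul (one α) x = x
  mul_one' : ∀ {α β : G} {x : A}, x ∈ H α β → mul x (one α) = x
  /-- (H3) coassociativity -/
  coassoc : ∀ (α β γ δ : G) (x : A), x ∈ H (α + β + γ) δ →
    (TensorProduct.assoc k A A A)
        ((TensorProduct.map (comul α β) LinearMap.id) (comul (α + β) γ x)) =
      (TensorProduct.map LinearMap.id (comul β γ)) (comul α (β + γ) x)
  /-- (H4) counitality -/
  counit_comul : ∀ (α β : G) (x : A), x ∈ H α β →
    (TensorProduct.lid k A) ((TensorProduct.map (counit β) LinearMap.id) (comul 0 α x)) = x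
  comul_counit : ∀ (α β : G) (x : A), x ∈ H α β →
    (TensorProduct.rid k A) ((TensorProduct.map LinearMap.id (counit β)) (comul α 0 x)) = x
  /-- (H5) compatibility of product and coproduct -/
  comul_mul : ∀ (α β γ δ : G) (x y : A), x ∈ H (α + β) γ → y ∈ H (α + β) δ →
    comul α β (mul x y) =
      (TensorProduct.map (TensorProduct.lift mul) (TensorProduct.lift mul))
        ((TensorProduct.tensorTensorTensorComm k A A A A) (comul α β x ⊗ₜ[k] comul α β y))
  /-- (H6) -/
  counit_mul : ∀ (α β : G) (x y : A), x ∈ H 0 α → y ∈ H 0 β →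
    counit (α + β) (mul x y) = counit α x * counit β y
  /-- (H7) -/
  comul_one : ∀ α β : G, comul α β (one (α + β)) = one α ⊗ₜ[k] one β
  /-- (H8) -/
  counit_one : counit 0 (one 0) = 1
  /-- (H9) antipode axiom -/
  antipode_left : ∀ (α β : G) (x : A), x ∈ H 0 β →
    TensorProduct.lift mul ((TensorProduct.map (S (-α) β) LinearMap.id) (comul (-α) α x)) =
      counit β x • one α
  antipode_right : ∀ (α β : G) (x : A), x ∈ H 0 β →
    TensorProduct.lift mul ((TensorProduct.map LinearMap.id (S (-α) β)) (comul α (-α) x)) =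
      counit β x • one α

attribute [instance] HopfGBialgebra.addCommGroup HopfGBialgebra.module


namespace HopfGBialgebra

variable {k G : Type*} [Field k] [AddCommGroup G] (Hb : HopfGBialgebra k G)

/-- Extract a finite representation of a coproduct with graded legs. -/
lemma comul_repr {α β γ : G} {x : Hb.A} (hx : x ∈ Hb.H (α + β) γ) :
    ∃ s : Finset (Hb.H α γ × Hb.H β γ),
      Hb.comul α β x = ∑ p ∈ s, (p.1 : Hb.A) ⊗ₜ[k] (p.2 : Hb.A) := by
  obtain ⟨t, ht⟩ := Hb.comul_mem hx
  obtain ⟨s, hs⟩ := TensorProduct.exists_finset t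
  refine ⟨s, ?_⟩
  rw [← ht, hs, map_sum]
  simp

lemma counit_repr_right {α β : G} {x : Hb.A} (hx : x ∈ Hb.H α β)
    {ι : Type*} {s : Finset ι} {m n : ι → Hb.A}
    (h : Hb.comul α 0 x = ∑ i ∈ s, m i ⊗ₜ[k] n i) :
    ∑ i ∈ s, Hb.counit β (n i) • m i = x := by
  have h2 := Hb.comul_counit α β x hx
  rw [h] at h2
  simpa [map_sum] using h2

lemma counit_repr_left {α β : G} {x : Hb.A} (hx : x ∈ Hb.H α β)
    {ι : Type*} {s : Finset ι} {m n : ι → Hb.A}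
    (h : Hb.comul 0 α x = ∑ i ∈ s, m i ⊗ₜ[k] n i) :
    ∑ i ∈ s, Hb.counit β (m i) • n i = x := by
  have h2 := Hb.counit_comul α β x hx
  rw [h] at h2
  simpa [map_sum] using h2

lemma comul_mul_repr {α β γ δ : G} {x y : Hb.A}
    (hx : x ∈ Hb.H (α + β) γ) (hy : y ∈ Hb.H (α + β) δ)
    {ι ι' : Type*} {s : Finset ι} {t : Finset ι'} {m n : ι → Hb.A} {m' n' : ι' → Hb.A}
    (h1 : Hb.comul α β x = ∑ i ∈ s, m i ⊗ₜ[k] n i)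
    (h2 : Hb.comul α β y = ∑ j ∈ t, m' j ⊗ₜ[k] n' j) :
    Hb.comul α β (Hb.mul x y) =
      ∑ i ∈ s, ∑ j ∈ t, (Hb.mul (m i) (m' j)) ⊗ₜ[k] (Hb.mul (n i) (n' j)) := by
  rw [Hb.comul_mul α β γ δ x y hx hy, h1, h2]
  simp only [TensorProduct.sum_tmul, TensorProduct.tmul_sum, map_sum,
    TensorProduct.tensorTensorTensorComm_tmul, TensorProduct.map_tmul, TensorProduct.lift.tmul]
  rw [Finset.sum_comm]

lemma ant_left {α δ : G} {w : Hb.A} (hw : w ∈ Hb.H 0 δ) :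
    TensorProduct.lift Hb.mul
        ((TensorProduct.map (Hb.S α δ) LinearMap.id) (Hb.comul α (-α) w)) =
      Hb.counit δ w • Hb.one (-α) := by
  simpa using Hb.antipode_left (-α) δ w hw

lemma ant_right {α δ : G} {w : Hb.A} (hw : w ∈ Hb.H 0 δ) :
    TensorProduct.lift Hb.mul
        ((TensorProduct.map LinearMap.id (Hb.S α δ)) (Hb.comul (-α) α w)) =
      Hb.counit δ w • Hb.one (-α) := by
  simpa using Hb.antipode_right (-α) δ w hw

lemma ant_left_repr {α δ : G} {w : Hb.A} (hw : w ∈ Hb.H 0 δ)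
    {ι : Type*} {s : Finset ι} {m n : ι → Hb.A}
    (h : Hb.comul α (-α) w = ∑ i ∈ s, m i ⊗ₜ[k] n i) :
    ∑ i ∈ s, Hb.mul (Hb.S α δ (m i)) (n i) = Hb.counit δ w • Hb.one (-α) := by
  have h2 := Hb.ant_left (α := α) hw
  rw [h] at h2
  simpa [map_sum] using h2

lemma ant_right_repr {α δ : G} {w : Hb.A} (hw : w ∈ Hb.H 0 δ)
    {ι : Type*} {s : Finset ι} {m n : ι → Hb.A}
    (h : Hb.comul (-α) α w = ∑ i ∈ s, m i ⊗ₜ[k] n i) :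
    ∑ i ∈ s, Hb.mul (m i) (Hb.S α δ (n i)) = Hb.counit δ w • Hb.one (-α) := by
  have h2 := Hb.ant_right (α := α) hw
  rw [h] at h2
  simpa [map_sum] using h2

/-- auxiliary linear map, linear in the "x-triple", for fixed y-components. -/
noncomputable def aux1 (α β γ : G) (a' b' c' : Hb.A) :
    (Hb.A ⊗[k] (Hb.A ⊗[k] Hb.A)) →ₗ[k] Hb.A :=
  (TensorProduct.lift Hb.mul).comp
    (TensorProduct.map ((Hb.S α (β + γ)).comp (Hb.mul.flip a'))
      ((TensorProduct.lift Hb.mul).comp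
        (TensorProduct.map (Hb.mul.flip b') ((Hb.mul (Hb.S α γ c')).comp (Hb.S α β)))))

lemma aux1_apply (α β γ : G) (a' b' c' a b c : Hb.A) :
    Hb.aux1 α β γ a' b' c' (a ⊗ₜ[k] (b ⊗ₜ[k] c)) =
      Hb.mul (Hb.S α (β + γ) (Hb.mul a a'))
        (Hb.mul (Hb.mul b b') (Hb.mul (Hb.S α γ c') (Hb.S α β c))) := by
  simp [aux1]

/-- auxiliary linear map, linear in the "y-triple", for fixed x-components. -/
noncomputable def aux2 (α β γ : G) (a b c : Hb.A) :
    (Hb.A ⊗[k] (Hb.A ⊗[k] Hb.A)) →ₗ[k] Hb.A :=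
  (TensorProduct.lift Hb.mul).comp
    (TensorProduct.map ((Hb.S α (β + γ)).comp (Hb.mul a))
      ((TensorProduct.lift Hb.mul).comp
        (TensorProduct.map (Hb.mul b) ((Hb.mul.flip (Hb.S α β c)).comp (Hb.S α γ)))))

lemma aux2_apply (α β γ : G) (a b c a' b' c' : Hb.A) :
    Hb.aux2 α β γ a b c (a' ⊗ₜ[k] (b' ⊗ₜ[k] c')) =
      Hb.mul (Hb.S α (β + γ) (Hb.mul a a'))
        (Hb.mul (Hb.mul b b') (Hb.mul (Hb.S α γ c') (Hb.S α β c))) := by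
  simp [aux2]

lemma ant_left_repr2 {α δ : G} {w : Hb.A} (hw : w ∈ Hb.H 0 δ)
    {ι ι' : Type*} {s : Finset ι} {t : ι → Finset ι'} {m n : ι → ι' → Hb.A}
    (h : Hb.comul α (-α) w = ∑ i ∈ s, ∑ j ∈ t i, m i j ⊗ₜ[k] n i j) :
    ∑ i ∈ s, ∑ j ∈ t i, Hb.mul (Hb.S α δ (m i j)) (n i j) =
      Hb.counit δ w • Hb.one (-α) := by
  have h2 := Hb.ant_left (α := α) hw
  rw [h] at h2
  simpa [map_sum] using h2

/-- the common 6-variable expression. -/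
noncomputable def X6 (α β γ : G) (a b c a' b' c' : Hb.A) : Hb.A :=
  Hb.mul (Hb.S α (β + γ) (Hb.mul a a'))
    (Hb.mul (Hb.mul b b') (Hb.mul (Hb.S α γ c') (Hb.S α β c)))

lemma aux1_apply' (α β γ : G) (a' b' c' a b c : Hb.A) :
    Hb.aux1 α β γ a' b' c' (a ⊗ₜ[k] (b ⊗ₜ[k] c)) = Hb.X6 α β γ a b c a' b' c' := by
  simp [aux1, X6]

lemma aux2_apply' (α β γ : G) (a b c a' b' c' : Hb.A) :
    Hb.aux2 α β γ a b c (a' ⊗ₜ[k] (b' ⊗ₜ[k] c')) = Hb.X6 α β γ a b c a' b' c' := by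
  simp [aux2, X6]

lemma mul_sum_left {ι : Type*} (s : Finset ι) (f : ι → Hb.A) (z : Hb.A) :
    Hb.mul (∑ i ∈ s, f i) z = ∑ i ∈ s, Hb.mul (f i) z := by
  simp [map_sum, LinearMap.sum_apply]

lemma mul_sum_right {ι : Type*} (s : Finset ι) (f : ι → Hb.A) (z : Hb.A) :
    Hb.mul z (∑ i ∈ s, f i) = ∑ i ∈ s, Hb.mul z (f i) := map_sum (Hb.mul z) _ _

end HopfGBialgebra

private lemma sum_swap4 {M : Type*} [AddCommMonoid M] {I J K L : Type*}
    (s : Finset I) (t : I → Finset J) (u : Finset K) (v : K → Finset L)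
    (f : I → J → K → L → M) :
    ∑ i ∈ s, ∑ j ∈ t i, ∑ k ∈ u, ∑ l ∈ v k, f i j k l
      = ∑ k ∈ u, ∑ l ∈ v k, ∑ i ∈ s, ∑ j ∈ t i, f i j k l := by
  calc ∑ i ∈ s, ∑ j ∈ t i, ∑ k ∈ u, ∑ l ∈ v k, f i j k l
      = ∑ i ∈ s, ∑ k ∈ u, ∑ j ∈ t i, ∑ l ∈ v k, f i j k l :=
        Finset.sum_congr rfl fun i _ => Finset.sum_comm
    _ = ∑ k ∈ u, ∑ i ∈ s, ∑ j ∈ t i, ∑ l ∈ v k, f i j k l := Finset.sum_comm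
    _ = ∑ k ∈ u, ∑ i ∈ s, ∑ l ∈ v k, ∑ j ∈ t i, f i j k l :=
        Finset.sum_congr rfl fun k _ => Finset.sum_congr rfl fun i _ => Finset.sum_comm
    _ = ∑ k ∈ u, ∑ l ∈ v k, ∑ i ∈ s, ∑ j ∈ t i, f i j k l :=
        Finset.sum_congr rfl fun k _ => Finset.sum_comm

/-- (H10): the antipode is an anti-homomorphism with respect to the product:
`S_α^{β+γ}(xy) = S_α^γ(y) S_α^β(x)` for `x ∈ H_α^β`, `y ∈ H_α^γ`. -/
theorem HopfGBialgebra.antipode_mul {k G : Type*} [Field k] [AddCommGroup G]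
    (Hb : HopfGBialgebra k G) (α β γ : G) (x y : Hb.A)
    (hx : x ∈ Hb.H α β) (hy : y ∈ Hb.H α γ) :
    Hb.S α (β + γ) (Hb.mul x y) = Hb.mul (Hb.S α γ y) (Hb.S α β x) := by
  classical
  -- second-style representation of x : Δ_{α,0} x, then Δ_{-α,α} on the second leg
  obtain ⟨sx2, hsx2⟩ := Hb.comul_repr (α := α) (β := (0:G)) (γ := β) (x := x) (by simpa using hx)
  choose vx hvx using fun p : Hb.H α β × Hb.H 0 β =>
    Hb.comul_repr (α := -α) (β := α) (γ := β) (x := (p.2 : Hb.A)) (by simpa using p.2.2)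
  -- first-style representation of x : Δ_{0,α} x, then Δ_{α,-α} on the first leg
  obtain ⟨sx1, hsx1⟩ := Hb.comul_repr (α := (0:G)) (β := α) (γ := β) (x := x) (by simpa using hx)
  choose tx htx using fun r : Hb.H 0 β × Hb.H α β =>
    Hb.comul_repr (α := α) (β := -α) (γ := β) (x := (r.1 : Hb.A)) (by simpa using r.1.2)
  -- same for y
  obtain ⟨sy2, hsy2⟩ := Hb.comul_repr (α := α) (β := (0:G)) (γ := γ) (x := y) (by simpa using hy)
  choose vy hvy using fun p : Hb.H α γ × Hb.H 0 γ =>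
    Hb.comul_repr (α := -α) (β := α) (γ := γ) (x := (p.2 : Hb.A)) (by simpa using p.2.2)
  obtain ⟨sy1, hsy1⟩ := Hb.comul_repr (α := (0:G)) (β := α) (γ := γ) (x := y) (by simpa using hy)
  choose ty hty using fun r : Hb.H 0 γ × Hb.H α γ =>
    Hb.comul_repr (α := α) (β := -α) (γ := γ) (x := (r.1 : Hb.A)) (by simpa using r.1.2)
  set Tx : Hb.A ⊗[k] (Hb.A ⊗[k] Hb.A) :=
    (TensorProduct.map LinearMap.id (Hb.comul (-α) α)) (Hb.comul α 0 x) with hTxdef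
  set Ty : Hb.A ⊗[k] (Hb.A ⊗[k] Hb.A) :=
    (TensorProduct.map LinearMap.id (Hb.comul (-α) α)) (Hb.comul α 0 y) with hTydef
  have hTx2 : Tx = ∑ p ∈ sx2, ∑ q ∈ vx p,
      (p.1 : Hb.A) ⊗ₜ[k] ((q.1 : Hb.A) ⊗ₜ[k] (q.2 : Hb.A)) := by
    rw [hTxdef, hsx2, map_sum]
    refine Finset.sum_congr rfl fun p _ => ?_
    rw [TensorProduct.map_tmul, LinearMap.id_coe, id_eq, hvx p, TensorProduct.tmul_sum]
  have hTy2 : Ty = ∑ p ∈ sy2, ∑ q ∈ vy p,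
      (p.1 : Hb.A) ⊗ₜ[k] ((q.1 : Hb.A) ⊗ₜ[k] (q.2 : Hb.A)) := by
    rw [hTydef, hsy2, map_sum]
    refine Finset.sum_congr rfl fun p _ => ?_
    rw [TensorProduct.map_tmul, LinearMap.id_coe, id_eq, hvy p, TensorProduct.tmul_sum]
  have hTx1 : Tx = ∑ r ∈ sx1, ∑ q ∈ tx r,
      (q.1 : Hb.A) ⊗ₜ[k] ((q.2 : Hb.A) ⊗ₜ[k] (r.2 : Hb.A)) := by
    have hco := Hb.coassoc α (-α) α β x (by simpa using hx)
    rw [add_neg_cancel, neg_add_cancel] at hco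
    rw [hTxdef, ← hco, hsx1, map_sum, map_sum]
    refine Finset.sum_congr rfl fun r _ => ?_
    rw [TensorProduct.map_tmul, LinearMap.id_coe, id_eq, htx r, TensorProduct.sum_tmul,
      map_sum]
    exact Finset.sum_congr rfl fun q _ => by rw [TensorProduct.assoc_tmul]
  have hTy1 : Ty = ∑ r ∈ sy1, ∑ q ∈ ty r,
      (q.1 : Hb.A) ⊗ₜ[k] ((q.2 : Hb.A) ⊗ₜ[k] (r.2 : Hb.A)) := by
    have hco := Hb.coassoc α (-α) α γ y (by simpa using hy)
    rw [add_neg_cancel, neg_add_cancel] at hco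
    rw [hTydef, ← hco, hsy1, map_sum, map_sum]
    refine Finset.sum_congr rfl fun r _ => ?_
    rw [TensorProduct.map_tmul, LinearMap.id_coe, id_eq, hty r, TensorProduct.sum_tmul,
      map_sum]
    exact Finset.sum_congr rfl fun q _ => by rw [TensorProduct.assoc_tmul]
  -- claim 1 : the quadruple sum over the first-style representations equals S(y)·S(x)
  have claim1 : Hb.mul (Hb.S α γ y) (Hb.S α β x)
      = ∑ r' ∈ sx1, ∑ q' ∈ tx r', ∑ r ∈ sy1, ∑ q ∈ ty r,
          Hb.X6 α β γ (q'.1 : Hb.A) (q'.2 : Hb.A) (r'.2 : Hb.A)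
            (q.1 : Hb.A) (q.2 : Hb.A) (r.2 : Hb.A) := by
    symm
    calc (∑ r' ∈ sx1, ∑ q' ∈ tx r', ∑ r ∈ sy1, ∑ q ∈ ty r,
            Hb.X6 α β γ (q'.1 : Hb.A) (q'.2 : Hb.A) (r'.2 : Hb.A)
              (q.1 : Hb.A) (q.2 : Hb.A) (r.2 : Hb.A))
        = ∑ r' ∈ sx1, ∑ r ∈ sy1, ∑ q' ∈ tx r', ∑ q ∈ ty r,
            Hb.X6 α β γ (q'.1 : Hb.A) (q'.2 : Hb.A) (r'.2 : Hb.A)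
              (q.1 : Hb.A) (q.2 : Hb.A) (r.2 : Hb.A) :=
          Finset.sum_congr rfl fun r' _ => Finset.sum_comm
      _ = ∑ r' ∈ sx1, ∑ r ∈ sy1,
            (Hb.counit β (r'.1 : Hb.A) * Hb.counit γ (r.1 : Hb.A)) •
              Hb.mul (Hb.S α γ (r.2 : Hb.A)) (Hb.S α β (r'.2 : Hb.A)) := by
          refine Finset.sum_congr rfl fun r' _ => Finset.sum_congr rfl fun r _ => ?_
          have hZ' : Hb.mul (Hb.S α γ (r.2 : Hb.A)) (Hb.S α β (r'.2 : Hb.A))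
              ∈ Hb.H (-α) (-γ + -β) := Hb.mul_mem (Hb.S_mem r.2.2) (Hb.S_mem r'.2.2)
          have hrep : Hb.comul α (-α) (Hb.mul (r'.1 : Hb.A) (r.1 : Hb.A))
              = ∑ q' ∈ tx r', ∑ q ∈ ty r,
                  (Hb.mul (q'.1 : Hb.A) (q.1 : Hb.A)) ⊗ₜ[k]
                    (Hb.mul (q'.2 : Hb.A) (q.2 : Hb.A)) :=
            Hb.comul_mul_repr
              (show (r'.1 : Hb.A) ∈ Hb.H (α + -α) β by simpa using r'.1.2)
              (show (r.1 : Hb.A) ∈ Hb.H (α + -α) γ by simpa using r.1.2)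
              (htx r') (hty r)
          calc (∑ q' ∈ tx r', ∑ q ∈ ty r,
                  Hb.X6 α β γ (q'.1 : Hb.A) (q'.2 : Hb.A) (r'.2 : Hb.A)
                    (q.1 : Hb.A) (q.2 : Hb.A) (r.2 : Hb.A))
              = ∑ q' ∈ tx r', ∑ q ∈ ty r,
                  Hb.mul
                    (Hb.mul
                      (Hb.S α (β + γ) (Hb.mul (q'.1 : Hb.A) (q.1 : Hb.A)))
                      (Hb.mul (q'.2 : Hb.A) (q.2 : Hb.A)))
                    (Hb.mul (Hb.S α γ (r.2 : Hb.A)) (Hb.S α β (r'.2 : Hb.A))) := by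
                refine Finset.sum_congr rfl fun q' _ => Finset.sum_congr rfl fun q _ => ?_
                simp only [HopfGBialgebra.X6]
                rw [Hb.mul_assoc' (Hb.S_mem (Hb.mul_mem q'.1.2 q.1.2))
                  (Hb.mul_mem q'.2.2 q.2.2) hZ']
            _ = Hb.mul
                  (∑ q' ∈ tx r', ∑ q ∈ ty r,
                    Hb.mul
                      (Hb.S α (β + γ) (Hb.mul (q'.1 : Hb.A) (q.1 : Hb.A)))
                      (Hb.mul (q'.2 : Hb.A) (q.2 : Hb.A)))
                  (Hb.mul (Hb.S α γ (r.2 : Hb.A)) (Hb.S α β (r'.2 : Hb.A))) := by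
                simp only [← Hb.mul_sum_left]
            _ = (Hb.counit β (r'.1 : Hb.A) * Hb.counit γ (r.1 : Hb.A)) •
                  Hb.mul (Hb.S α γ (r.2 : Hb.A)) (Hb.S α β (r'.2 : Hb.A)) := by
                rw [Hb.ant_left_repr2 (Hb.mul_mem r'.1.2 r.1.2) hrep]
                simp only [map_smul, LinearMap.smul_apply]
                rw [Hb.one_mul' hZ', Hb.counit_mul β γ _ _ r'.1.2 r.1.2]
      _ = Hb.mul (Hb.S α γ y) (Hb.S α β x) := by
          have hx1 := Hb.counit_repr_left hx hsx1
          have hy1 := Hb.counit_repr_left hy hsy1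
          conv_rhs => rw [← hx1, ← hy1,
            map_sum (Hb.S α γ) _ sy1, map_sum (Hb.S α β) _ sx1, Hb.mul_sum_left]
          conv_rhs => simp only [Hb.mul_sum_right]
          rw [Finset.sum_comm]
          refine Finset.sum_congr rfl fun r _ => Finset.sum_congr rfl fun r' _ => ?_
          simp only [map_smul, LinearMap.smul_apply, smul_smul]
  -- claim 2 : the quadruple sum over the second-style representations equals S(xy)
  have claim2 : (∑ p ∈ sx2, ∑ j ∈ vx p, ∑ r ∈ sy2, ∑ l ∈ vy r,
          Hb.X6 α β γ (p.1 : Hb.A) (j.1 : Hb.A) (j.2 : Hb.A)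
            (r.1 : Hb.A) (l.1 : Hb.A) (l.2 : Hb.A))
      = Hb.S α (β + γ) (Hb.mul x y) := by
    calc (∑ p ∈ sx2, ∑ j ∈ vx p, ∑ r ∈ sy2, ∑ l ∈ vy r,
            Hb.X6 α β γ (p.1 : Hb.A) (j.1 : Hb.A) (j.2 : Hb.A)
              (r.1 : Hb.A) (l.1 : Hb.A) (l.2 : Hb.A))
        = ∑ p ∈ sx2, ∑ r ∈ sy2, ∑ j ∈ vx p, ∑ l ∈ vy r,
            Hb.X6 α β γ (p.1 : Hb.A) (j.1 : Hb.A) (j.2 : Hb.A)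
              (r.1 : Hb.A) (l.1 : Hb.A) (l.2 : Hb.A) :=
          Finset.sum_congr rfl fun p _ => Finset.sum_comm
      _ = ∑ p ∈ sx2, ∑ r ∈ sy2, ∑ j ∈ vx p,
            Hb.counit γ (r.2 : Hb.A) •
              Hb.mul (Hb.S α (β + γ) (Hb.mul (p.1 : Hb.A) (r.1 : Hb.A)))
                (Hb.mul (j.1 : Hb.A) (Hb.S α β (j.2 : Hb.A))) := by
          refine Finset.sum_congr rfl fun p _ => Finset.sum_congr rfl fun r _ =>
            Finset.sum_congr rfl fun j _ => ?_
          have hj1 : (j.1 : Hb.A) ∈ Hb.H (-α) β := j.1.2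
          have hj2 : (j.2 : Hb.A) ∈ Hb.H α β := j.2.2
          calc (∑ l ∈ vy r,
                  Hb.X6 α β γ (p.1 : Hb.A) (j.1 : Hb.A) (j.2 : Hb.A)
                    (r.1 : Hb.A) (l.1 : Hb.A) (l.2 : Hb.A))
              = ∑ l ∈ vy r,
                  Hb.mul (Hb.S α (β + γ) (Hb.mul (p.1 : Hb.A) (r.1 : Hb.A)))
                    (Hb.mul (Hb.mul (j.1 : Hb.A)
                        (Hb.mul (l.1 : Hb.A) (Hb.S α γ (l.2 : Hb.A))))
                      (Hb.S α β (j.2 : Hb.A))) := by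
                refine Finset.sum_congr rfl fun l _ => ?_
                simp only [HopfGBialgebra.X6]
                congr 1
                rw [← Hb.mul_assoc' (Hb.mul_mem hj1 l.1.2) (Hb.S_mem l.2.2) (Hb.S_mem hj2),
                  Hb.mul_assoc' hj1 l.1.2 (Hb.S_mem l.2.2)]
            _ = Hb.mul (Hb.S α (β + γ) (Hb.mul (p.1 : Hb.A) (r.1 : Hb.A)))
                  (Hb.mul (Hb.mul (j.1 : Hb.A)
                      (∑ l ∈ vy r, Hb.mul (l.1 : Hb.A) (Hb.S α γ (l.2 : Hb.A))))
                    (Hb.S α β (j.2 : Hb.A))) := by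
                simp only [← Hb.mul_sum_right, ← Hb.mul_sum_left]
            _ = Hb.counit γ (r.2 : Hb.A) •
                  Hb.mul (Hb.S α (β + γ) (Hb.mul (p.1 : Hb.A) (r.1 : Hb.A)))
                    (Hb.mul (j.1 : Hb.A) (Hb.S α β (j.2 : Hb.A))) := by
                rw [Hb.ant_right_repr r.2.2 (hvy r)]
                simp only [map_smul, LinearMap.smul_apply]
                rw [Hb.mul_one' hj1]
      _ = ∑ p ∈ sx2, ∑ r ∈ sy2,
            Hb.counit γ (r.2 : Hb.A) • Hb.counit β (p.2 : Hb.A) •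
              Hb.S α (β + γ) (Hb.mul (p.1 : Hb.A) (r.1 : Hb.A)) := by
          refine Finset.sum_congr rfl fun p _ => Finset.sum_congr rfl fun r _ => ?_
          have hZ : Hb.S α (β + γ) (Hb.mul (p.1 : Hb.A) (r.1 : Hb.A))
              ∈ Hb.H (-α) (-(β + γ)) := Hb.S_mem (Hb.mul_mem p.1.2 r.1.2)
          rw [← Finset.smul_sum, ← Hb.mul_sum_right, Hb.ant_right_repr p.2.2 (hvx p),
            map_smul, Hb.mul_one' hZ]
      _ = Hb.S α (β + γ) (Hb.mul x y) := by
          have hx2 := Hb.counit_repr_right hx hsx2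
          have hy2 := Hb.counit_repr_right hy hsy2
          conv_rhs => rw [← hx2, ← hy2]
          rw [Hb.mul_sum_left, map_sum]
          refine Finset.sum_congr rfl fun p _ => ?_
          rw [Hb.mul_sum_right, map_sum]
          refine Finset.sum_congr rfl fun r _ => ?_
          simp only [map_smul, LinearMap.smul_apply]
  -- the linearity bridge
  have e1 : (∑ r' ∈ sx1, ∑ q' ∈ tx r', ∑ r ∈ sy1, ∑ q ∈ ty r,
        Hb.X6 α β γ (q'.1 : Hb.A) (q'.2 : Hb.A) (r'.2 : Hb.A)
          (q.1 : Hb.A) (q.2 : Hb.A) (r.2 : Hb.A))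
      = (∑ r ∈ sy1, ∑ q ∈ ty r,
          Hb.aux1 α β γ (q.1 : Hb.A) (q.2 : Hb.A) (r.2 : Hb.A)) Tx := by
    rw [hTx1]
    simp only [map_sum, LinearMap.sum_apply, Hb.aux1_apply']
  have e2 : (∑ r ∈ sy1, ∑ q ∈ ty r,
        Hb.aux1 α β γ (q.1 : Hb.A) (q.2 : Hb.A) (r.2 : Hb.A)) Tx
      = ∑ p ∈ sx2, ∑ j ∈ vx p, ∑ r ∈ sy1, ∑ q ∈ ty r,
          Hb.X6 α β γ (p.1 : Hb.A) (j.1 : Hb.A) (j.2 : Hb.A)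
            (q.1 : Hb.A) (q.2 : Hb.A) (r.2 : Hb.A) := by
    rw [hTx2]
    simp only [map_sum, LinearMap.sum_apply, Hb.aux1_apply']
  have e3 : (∑ p ∈ sx2, ∑ j ∈ vx p,
        Hb.aux2 α β γ (p.1 : Hb.A) (j.1 : Hb.A) (j.2 : Hb.A)) Ty
      = ∑ p ∈ sx2, ∑ j ∈ vx p, ∑ r ∈ sy1, ∑ q ∈ ty r,
          Hb.X6 α β γ (p.1 : Hb.A) (j.1 : Hb.A) (j.2 : Hb.A)
            (q.1 : Hb.A) (q.2 : Hb.A) (r.2 : Hb.A) := by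
    rw [hTy1]
    simp only [map_sum, LinearMap.sum_apply, Hb.aux2_apply']
    exact (sum_swap4 sx2 vx sy1 ty _).symm
  have e4 : (∑ p ∈ sx2, ∑ j ∈ vx p,
        Hb.aux2 α β γ (p.1 : Hb.A) (j.1 : Hb.A) (j.2 : Hb.A)) Ty
      = ∑ p ∈ sx2, ∑ j ∈ vx p, ∑ r ∈ sy2, ∑ l ∈ vy r,
          Hb.X6 α β γ (p.1 : Hb.A) (j.1 : Hb.A) (j.2 : Hb.A)
            (r.1 : Hb.A) (l.1 : Hb.A) (l.2 : Hb.A) := by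
    rw [hTy2]
    simp only [map_sum, LinearMap.sum_apply, Hb.aux2_apply']
    exact (sum_swap4 sx2 vx sy2 vy _).symm
  rw [claim1, e1, e2, ← e3, e4, claim2]
end

section
/- Let H be a ribbon Hopf G-bialgebra. Then the antipode applied to both legs preserves the R-matrix up to sign change of indices: Σ_i S_α^{β/2}((R'_i)_α^{β/2}) ⊗ S_β^{α/2}((R''_i)_β^{α/2}) = R_{-α,-β} for all α, β ∈ G. -/
open TensorProduct

/-- The componentwise product on a tensor product of two (nonunital) algebra-like modules,
`(x ⊗ y) · (x' ⊗ y') = (x x') ⊗ (y y')`. -/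
noncomputable def tmulMul {k M N : Type*} [Field k] [AddCommGroup M] [Module k M]
    [AddCommGroup N] [Module k N]
    (p : M →ₗ[k] M →ₗ[k] M) (q : N →ₗ[k] N →ₗ[k] N) :
    (M ⊗[k] N) →ₗ[k] (M ⊗[k] N) →ₗ[k] M ⊗[k] N :=
  TensorProduct.curry ((TensorProduct.map (TensorProduct.lift p) (TensorProduct.lift q)) ∘ₗ
    (TensorProduct.tensorTensorTensorComm k M N M N).toLinearMap)

/-- The Drinfeld element `u = Σ_i S(R''_i) R'_i` associated with a product, an antipode
component and an R-matrix component. -/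
noncomputable def drinfeldAux {k A : Type*} [Field k] [AddCommGroup A] [Module k A]
    (mul : A →ₗ[k] A →ₗ[k] A) (S : A →ₗ[k] A) (Rm : A ⊗[k] A) : A :=
  TensorProduct.lift mul ((TensorProduct.map S LinearMap.id) ((TensorProduct.comm k A A) Rm))

/-- A ribbon Hopf `G`-bialgebra: a Hopf `G`-bialgebra over a commutative ring `G` with `2`
invertible, together with an invertible R-matrix `R_{α,β} ∈ H_α^{β/2} ⊗ H_β^{α/2}`
satisfying (R1)–(R3), an invertible central ribbon element `v_α ∈ Z(H_α^{-α})`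
satisfying (R4)–(R7), and the (automatically invertible) antipode's inverse. -/
structure RibbonHopfGBialgebra (k : Type*) (G : Type*) [Field k] [CommRing G]
    [Invertible (2 : G)] extends HopfGBialgebra k G where
  /-- the R-matrix `R_{α,β}` -/
  R : G → G → A ⊗[k] A
  R_mem : ∀ α β : G, R α β ∈ LinearMap.range
    (TensorProduct.map (H α (⅟(2 : G) * β)).subtype (H β (⅟(2 : G) * α)).subtype)
  /-- inverse of the R-matrix in `H_α^⊕ ⊗ H_β^⊕` -/
  Rinv : G → G → A ⊗[k] A
  R_Rinv : ∀ α β : G, tmulMul mul mul (R α β) (Rinv α β) = one α ⊗ₜ[k] one β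
  Rinv_R : ∀ α β : G, tmulMul mul mul (Rinv α β) (R α β) = one α ⊗ₜ[k] one β
  /-- (R1): `R · Δ_{α,β}(x) = τ(Δ_{β,α}(x)) · R` -/
  R_comul : ∀ (α β γ : G) (x : A), x ∈ H (α + β) γ →
    tmulMul mul mul (R α β) (comul α β x) =
      tmulMul mul mul ((TensorProduct.comm k A A) (comul β α x)) (R α β)
  /-- (R2): `(id ⊗ Δ_{β,γ})(R_{α,β+γ}) = (R_{α,γ})_{13} (R_{α,β})_{12}` -/
  comul_R_right : ∀ α β γ : G,
    (TensorProduct.map LinearMap.id (comul β γ)) (R α (β + γ)) =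
      (TensorProduct.map (TensorProduct.lift mul) (TensorProduct.comm k A A).toLinearMap)
        ((TensorProduct.tensorTensorTensorComm k A A A A) (R α γ ⊗ₜ[k] R α β))
  /-- (R3): `(Δ_{α,β} ⊗ id)(R_{α+β,γ}) = (R_{α,γ})_{13} (R_{β,γ})_{23}` -/
  comul_R_left : ∀ α β γ : G,
    (TensorProduct.map (comul α β) LinearMap.id) (R (α + β) γ) =
      (TensorProduct.map LinearMap.id (TensorProduct.lift mul))
        ((TensorProduct.tensorTensorTensorComm k A A A A) (R α γ ⊗ₜ[k] R β γ))
  /-- the ribbon element `v_α ∈ H_α^{-α}` -/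
  v : G → A
  v_mem : ∀ α : G, v α ∈ H α (-α)
  v_central : ∀ (α β : G) (x : A), x ∈ H α β → mul (v α) x = mul x (v α)
  /-- inverse of the ribbon element -/
  vinv : G → A
  vinv_mem : ∀ α : G, vinv α ∈ H α α
  v_vinv : ∀ α : G, mul (v α) (vinv α) = one α
  vinv_v : ∀ α : G, mul (vinv α) (v α) = one α
  /-- (R4): `v² = u S(u)` where `u` is the Drinfeld element -/
  v_sq : ∀ α : G, mul (v α) (v α) =
    mul (drinfeldAux mul (S (-α) (⅟(2 : G) * α)) (R α (-α)))
      (S (-α) α (drinfeldAux mul (S α (⅟(2 : G) * (-α))) (R (-α) α)))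
  /-- (R5): formula for `Δ_{α,β}(v_{α+β})` -/
  comul_v : ∀ α β : G,
    comul α β (v (α + β)) =
      (TensorProduct.map
        ((mul (v α)) ∘ₗ (TensorProduct.lift mul) ∘ₗ
          (TensorProduct.map (S (-α) (⅟(2 : G) * β)) LinearMap.id))
        ((mul (v β)) ∘ₗ (TensorProduct.lift mul) ∘ₗ
          (TensorProduct.map LinearMap.id (S (-β) (⅟(2 : G) * α)))))
        ((TensorProduct.tensorTensorTensorComm k A A A A)
          (R (-α) β ⊗ₜ[k] (TensorProduct.comm k A A) (R (-β) α)))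
  /-- (R6) -/
  counit_v : counit 0 (v 0) = 1
  /-- (R7) -/
  S_v : ∀ α : G, S α (-α) (v α) = v (-α)
  /-- the inverse of the antipode (the antipode of a ribbon Hopf `G`-bialgebra is
  invertible) -/
  Sinv : G → G → A →ₗ[k] A
  Sinv_S : ∀ (α β : G) (x : A), x ∈ H α β → Sinv α β (S α β x) = x
  S_Sinv : ∀ (α β : G) (x : A), x ∈ H (-α) (-β) → S α β (Sinv α β x) = x

namespace RibbonHopfGBialgebra

open LinearMap

variable {k G : Type*} [Field k] [CommRing G] [Invertible (2 : G)]
  (Hb : RibbonHopfGBialgebra k G)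

@[simp] lemma tmulMul_tmul {M N : Type*} [AddCommGroup M] [Module k M] [AddCommGroup N]
    [Module k N] (p : M →ₗ[k] M →ₗ[k] M) (q : N →ₗ[k] N →ₗ[k] N) (a c : M) (b d : N) :
    tmulMul p q (a ⊗ₜ[k] b) (c ⊗ₜ[k] d) = p a c ⊗ₜ[k] q b d := by
  simp [tmulMul, TensorProduct.tensorTensorTensorComm_tmul]

/-- membership of an element of `A ⊗ A` in the (image of the) tensor product of two graded
pieces -/
def mem2 (p q : Submodule k Hb.A) (x : Hb.A ⊗[k] Hb.A) : Prop :=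
  x ∈ LinearMap.range (TensorProduct.map p.subtype q.subtype)

lemma mem2_ind {p q : Submodule k Hb.A} {P : Hb.A ⊗[k] Hb.A → Prop}
    (h0 : P 0) (hadd : ∀ u v, P u → P v → P (u + v))
    (ht : ∀ a ∈ p, ∀ b ∈ q, P (a ⊗ₜ[k] b)) :
    ∀ x, Hb.mem2 p q x → P x := by
  rintro x ⟨y, rfl⟩
  induction y with
  | zero => simpa using h0
  | tmul a b => simpa using ht a a.2 b b.2
  | add u v hu hv => simpa using hadd _ _ hu hv

lemma mem2_tmul {p q : Submodule k Hb.A} {a b : Hb.A} (ha : a ∈ p) (hb : b ∈ q) :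
    Hb.mem2 p q (a ⊗ₜ[k] b) :=
  ⟨(⟨a, ha⟩ : p) ⊗ₜ[k] (⟨b, hb⟩ : q), by simp⟩

lemma mem2_zero {p q : Submodule k Hb.A} : Hb.mem2 p q 0 :=
  (LinearMap.range _).zero_mem

lemma mem2_add {p q : Submodule k Hb.A} {x y : Hb.A ⊗[k] Hb.A}
    (hx : Hb.mem2 p q x) (hy : Hb.mem2 p q y) : Hb.mem2 p q (x + y) :=
  (LinearMap.range _).add_mem hx hy

lemma mem2_map {p q p' q' : Submodule k Hb.A} {f g : Hb.A →ₗ[k] Hb.A}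
    (hf : ∀ a ∈ p, f a ∈ p') (hg : ∀ b ∈ q, g b ∈ q') {x : Hb.A ⊗[k] Hb.A}
    (hx : Hb.mem2 p q x) : Hb.mem2 p' q' (TensorProduct.map f g x) := by
  refine Hb.mem2_ind (P := fun y => Hb.mem2 p' q' (TensorProduct.map f g y)) ?_ ?_ ?_ x hx
  · simpa using Hb.mem2_zero
  · intro u v hu hv
    simpa [map_add] using Hb.mem2_add hu hv
  · intro a ha b hb
    simpa using Hb.mem2_tmul (hf a ha) (hg b hb)

end RibbonHopfGBialgebra
namespace RibbonHopfGBialgebra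

open LinearMap

variable {k G : Type*} [Field k] [CommRing G] [Invertible (2 : G)]
  (Hb : RibbonHopfGBialgebra k G)

/-! ### pointwise congruence lemmas -/

lemma mapl_congr {p q : Submodule k Hb.A} {x : Hb.A ⊗[k] Hb.A} (hx : Hb.mem2 p q x)
    {M : Type*} [AddCommGroup M] [Module k M] {f g : Hb.A →ₗ[k] M}
    (h : ∀ a ∈ p, f a = g a) :
    TensorProduct.map f LinearMap.id x = TensorProduct.map g LinearMap.id x := by
  refine Hb.mem2_ind (P := fun y => TensorProduct.map f LinearMap.id y =
    TensorProduct.map g LinearMap.id y) ?_ ?_ ?_ x hx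
  · simp
  · intro u v hu hv; simp only [map_add, hu, hv]
  · intro a ha b _; simp [h a ha]

lemma mapr_congr {p q : Submodule k Hb.A} {x : Hb.A ⊗[k] Hb.A} (hx : Hb.mem2 p q x)
    {M : Type*} [AddCommGroup M] [Module k M] {f g : Hb.A →ₗ[k] M}
    (h : ∀ b ∈ q, f b = g b) :
    TensorProduct.map LinearMap.id f x = TensorProduct.map LinearMap.id g x := by
  refine Hb.mem2_ind (P := fun y => TensorProduct.map LinearMap.id f y =
    TensorProduct.map LinearMap.id g y) ?_ ?_ ?_ x hx
  · simp
  · intro u v hu hv; simp only [map_add, hu, hv]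
  · intro a _ b hb; simp [h b hb]

/-! ### composition plumbing -/

lemma map_fst_fst {M M₁ M₂ N : Type*} [AddCommGroup M] [Module k M] [AddCommGroup M₁]
    [Module k M₁] [AddCommGroup M₂] [Module k M₂] [AddCommGroup N] [Module k N]
    (f : M₁ →ₗ[k] M₂) (g : M →ₗ[k] M₁) (x : M ⊗[k] N) :
    TensorProduct.map f LinearMap.id (TensorProduct.map g LinearMap.id x) =
      TensorProduct.map (f ∘ₗ g) LinearMap.id x := by
  induction x with
  | zero => simp
  | tmul a b => simp
  | add u v hu hv => simp only [map_add, hu, hv]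

lemma map_snd_snd {M M₁ M₂ N : Type*} [AddCommGroup M] [Module k M] [AddCommGroup M₁]
    [Module k M₁] [AddCommGroup M₂] [Module k M₂] [AddCommGroup N] [Module k N]
    (f : M₁ →ₗ[k] M₂) (g : N →ₗ[k] M₁) (x : M ⊗[k] N) :
    TensorProduct.map LinearMap.id f (TensorProduct.map LinearMap.id g x) =
      TensorProduct.map LinearMap.id (f ∘ₗ g) x := by
  induction x with
  | zero => simp
  | tmul a b => simp
  | add u v hu hv => simp only [map_add, hu, hv]

lemma map_fst_snd {M M₁ N N₁ : Type*} [AddCommGroup M] [Module k M] [AddCommGroup M₁]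
    [Module k M₁] [AddCommGroup N] [Module k N] [AddCommGroup N₁] [Module k N₁]
    (f : M →ₗ[k] M₁) (g : N →ₗ[k] N₁) (x : M ⊗[k] N) :
    TensorProduct.map LinearMap.id g (TensorProduct.map f LinearMap.id x) =
      TensorProduct.map f g x := by
  induction x with
  | zero => simp
  | tmul a b => simp
  | add u v hu hv => simp only [map_add, hu, hv]

lemma map_smulRight_l {M N M₂ : Type*} [AddCommGroup M] [Module k M] [AddCommGroup N]
    [Module k N] [AddCommGroup M₂] [Module k M₂] (φ : M →ₗ[k] k) (c : M₂) (x : M ⊗[k] N) :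
    TensorProduct.map (LinearMap.smulRight φ c) LinearMap.id x =
      c ⊗ₜ[k] (TensorProduct.lid k N (TensorProduct.map φ LinearMap.id x)) := by
  induction x with
  | zero => simp
  | tmul a b => simp [TensorProduct.smul_tmul, TensorProduct.tmul_smul]
  | add u v hu hv => simp only [map_add, hu, hv, TensorProduct.tmul_add]

lemma map_smulRight_r {M N M₂ : Type*} [AddCommGroup M] [Module k M] [AddCommGroup N]
    [Module k N] [AddCommGroup M₂] [Module k M₂] (φ : N →ₗ[k] k) (c : M₂) (x : M ⊗[k] N) :
    TensorProduct.map LinearMap.id (LinearMap.smulRight φ c) x =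
      (TensorProduct.rid k M (TensorProduct.map LinearMap.id φ x)) ⊗ₜ[k] c := by
  induction x with
  | zero => simp
  | tmul a b => simp [TensorProduct.smul_tmul, TensorProduct.tmul_smul]
  | add u v hu hv => simp only [map_add, hu, hv, TensorProduct.add_tmul]

lemma rid_map_fst {M N M₂ : Type*} [AddCommGroup M] [Module k M] [AddCommGroup N]
    [Module k N] [AddCommGroup M₂] [Module k M₂] (f : M →ₗ[k] M₂) (φ : N →ₗ[k] k)
    (x : M ⊗[k] N) :
    TensorProduct.rid k M₂ (TensorProduct.map LinearMap.id φ
        (TensorProduct.map f LinearMap.id x)) =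
      f (TensorProduct.rid k M (TensorProduct.map LinearMap.id φ x)) := by
  induction x with
  | zero => simp
  | tmul a b => simp
  | add u v hu hv => simp only [map_add, hu, hv]

end RibbonHopfGBialgebra
namespace RibbonHopfGBialgebra

open LinearMap

variable {k G : Type*} [Field k] [CommRing G] [Invertible (2 : G)]
  (Hb : RibbonHopfGBialgebra k G)

local notation "AA" => Hb.A

lemma PL_mm (U V : AA ⊗[k] AA) :
    TensorProduct.map (TensorProduct.lift Hb.mul) (TensorProduct.lift Hb.mul)
        (TensorProduct.tensorTensorTensorComm k AA AA AA AA (U ⊗ₜ[k] V)) =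
      tmulMul Hb.mul Hb.mul U V := by
  induction U with
  | zero => simp
  | add u v hu hv => simp only [TensorProduct.add_tmul, map_add, LinearMap.add_apply, hu, hv]
  | tmul a b =>
    induction V with
    | zero => simp
    | add u v hu hv => simp only [TensorProduct.tmul_add, map_add, LinearMap.map_add, hu, hv]
    | tmul c d => simp [TensorProduct.tensorTensorTensorComm_tmul]

lemma PL_A (f : AA →ₗ[k] AA) (X Y : AA ⊗[k] AA) :
    TensorProduct.map (TensorProduct.lift Hb.mul ∘ₗ TensorProduct.map f LinearMap.id)
        LinearMap.id
        (TensorProduct.map LinearMap.id (TensorProduct.lift Hb.mul)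
          (TensorProduct.tensorTensorTensorComm k AA AA AA AA (X ⊗ₜ[k] Y))) =
      tmulMul Hb.mul Hb.mul (TensorProduct.map f LinearMap.id X) Y := by
  induction X with
  | zero => simp
  | add u v hu hv => simp only [TensorProduct.add_tmul, map_add, LinearMap.add_apply, hu, hv]
  | tmul a b =>
    induction Y with
    | zero => simp
    | add u v hu hv =>
      simp only [TensorProduct.tmul_add, map_add, LinearMap.map_add, hu, hv]
    | tmul c d => simp [TensorProduct.tensorTensorTensorComm_tmul]

lemma PL_A' (f : AA →ₗ[k] AA) (X Y : AA ⊗[k] AA) :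
    TensorProduct.map (TensorProduct.lift Hb.mul ∘ₗ TensorProduct.map LinearMap.id f)
        LinearMap.id
        (TensorProduct.map LinearMap.id (TensorProduct.lift Hb.mul)
          (TensorProduct.tensorTensorTensorComm k AA AA AA AA (X ⊗ₜ[k] Y))) =
      tmulMul Hb.mul Hb.mul X (TensorProduct.map f LinearMap.id Y) := by
  induction X with
  | zero => simp
  | add u v hu hv => simp only [TensorProduct.add_tmul, map_add, LinearMap.add_apply, hu, hv]
  | tmul a b =>
    induction Y with
    | zero => simp
    | add u v hu hv =>
      simp only [TensorProduct.tmul_add, map_add, LinearMap.map_add, hu, hv]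
    | tmul c d => simp [TensorProduct.tensorTensorTensorComm_tmul]

lemma PL_C (f : AA →ₗ[k] AA) (X Y : AA ⊗[k] AA) :
    TensorProduct.map LinearMap.id (TensorProduct.lift Hb.mul ∘ₗ
        TensorProduct.map LinearMap.id f)
        (TensorProduct.map (TensorProduct.lift Hb.mul) (TensorProduct.comm k AA AA).toLinearMap
          (TensorProduct.tensorTensorTensorComm k AA AA AA AA (X ⊗ₜ[k] Y))) =
      tmulMul Hb.mul Hb.mul.flip (TensorProduct.map LinearMap.id f X) Y := by
  induction X with
  | zero => simp
  | add u v hu hv => simp only [TensorProduct.add_tmul, map_add, LinearMap.add_apply, hu, hv]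
  | tmul a b =>
    induction Y with
    | zero => simp
    | add u v hu hv =>
      simp only [TensorProduct.tmul_add, map_add, LinearMap.map_add, hu, hv]
    | tmul c d => simp [TensorProduct.tensorTensorTensorComm_tmul]

lemma PL_F1 (φ : AA →ₗ[k] k) (X Y : AA ⊗[k] AA) :
    TensorProduct.map ((TensorProduct.lid k AA).toLinearMap ∘ₗ
        TensorProduct.map φ LinearMap.id) LinearMap.id
        (TensorProduct.map LinearMap.id (TensorProduct.lift Hb.mul)
          (TensorProduct.tensorTensorTensorComm k AA AA AA AA (X ⊗ₜ[k] Y))) =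
      TensorProduct.map LinearMap.id
        (Hb.mul (TensorProduct.lid k AA (TensorProduct.map φ LinearMap.id X))) Y := by
  induction X with
  | zero => simp
  | add u v hu hv =>
    simp only [TensorProduct.add_tmul, map_add, LinearMap.add_apply, hu, hv,
      TensorProduct.map_add_right]
  | tmul a b =>
    induction Y with
    | zero => simp
    | add u v hu hv =>
      simp only [TensorProduct.tmul_add, map_add, LinearMap.map_add, hu, hv]
    | tmul c d =>
      simp [TensorProduct.tensorTensorTensorComm_tmul, TensorProduct.smul_tmul,
        TensorProduct.tmul_smul]

lemma PL_F4 (φ : AA →ₗ[k] k) (X Y : AA ⊗[k] AA) :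
    TensorProduct.map LinearMap.id ((TensorProduct.lid k AA).toLinearMap ∘ₗ
        TensorProduct.map φ LinearMap.id)
        (TensorProduct.map (TensorProduct.lift Hb.mul) (TensorProduct.comm k AA AA).toLinearMap
          (TensorProduct.tensorTensorTensorComm k AA AA AA AA (X ⊗ₜ[k] Y))) =
      TensorProduct.map
        (Hb.mul.flip (TensorProduct.rid k AA (TensorProduct.map LinearMap.id φ Y)))
        LinearMap.id X := by
  induction Y with
  | zero => simp
  | add u v hu hv =>
    simp only [TensorProduct.tmul_add, map_add, LinearMap.map_add, hu, hv,
      TensorProduct.map_add_left, LinearMap.add_apply]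
  | tmul c d =>
    induction X with
    | zero => simp
    | add u v hu hv =>
      simp only [TensorProduct.add_tmul, map_add, LinearMap.add_apply, hu, hv]
    | tmul a b =>
      simp [TensorProduct.tensorTensorTensorComm_tmul, TensorProduct.smul_tmul,
        TensorProduct.tmul_smul]

lemma PL_W (f : AA →ₗ[k] AA) (X Y : AA ⊗[k] AA) :
    TensorProduct.map LinearMap.id (TensorProduct.lift Hb.mul ∘ₗ
        TensorProduct.map LinearMap.id f)
        (TensorProduct.map (TensorProduct.lift Hb.mul) LinearMap.id
          (TensorProduct.tensorTensorTensorComm k AA AA AA AA (X ⊗ₜ[k] Y))) =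
      tmulMul Hb.mul Hb.mul X (TensorProduct.map LinearMap.id f Y) := by
  induction X with
  | zero => simp
  | add u v hu hv => simp only [TensorProduct.add_tmul, map_add, LinearMap.add_apply, hu, hv]
  | tmul a b =>
    induction Y with
    | zero => simp
    | add u v hu hv =>
      simp only [TensorProduct.tmul_add, map_add, LinearMap.map_add, hu, hv]
    | tmul c d => simp [TensorProduct.tensorTensorTensorComm_tmul]

end RibbonHopfGBialgebra
namespace RibbonHopfGBialgebra

open LinearMap

variable {k G : Type*} [Field k] [CommRing G] [Invertible (2 : G)]
  (Hb : RibbonHopfGBialgebra k G)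

/-- `(S ⊗ id)(R_{-α,β})`, the candidate inverse of `R_{α,β}`. -/
noncomputable def Pm (α β : G) : Hb.A ⊗[k] Hb.A :=
  TensorProduct.map (Hb.S (-α) (⅟(2:G) * β)) LinearMap.id (Hb.R (-α) β)

/-- `(id ⊗ S)(R_{α,-β})`. -/
noncomputable def Qm (α β : G) : Hb.A ⊗[k] Hb.A :=
  TensorProduct.map LinearMap.id (Hb.S (-β) (⅟(2:G) * α)) (Hb.R α (-β))

/-- `(S ⊗ S)(R_{-α,-β})`. -/
noncomputable def Tm (α β : G) : Hb.A ⊗[k] Hb.A :=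
  TensorProduct.map (Hb.S (-α) (⅟(2:G) * (-β))) (Hb.S (-β) (⅟(2:G) * (-α))) (Hb.R (-α) (-β))

/-- `(ε ⊗ id)(R_{0,β})`. -/
noncomputable def wA (β : G) : Hb.A :=
  TensorProduct.lid k Hb.A
    (TensorProduct.map (Hb.counit (⅟(2:G) * β)) LinearMap.id (Hb.R 0 β))

/-- `(id ⊗ ε)(R_{α,0})`. -/
noncomputable def uA (α : G) : Hb.A :=
  TensorProduct.rid k Hb.A
    (TensorProduct.map LinearMap.id (Hb.counit (⅟(2:G) * α)) (Hb.R α 0))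

lemma R_mem2 (α β : G) :
    Hb.mem2 (Hb.H α (⅟(2:G) * β)) (Hb.H β (⅟(2:G) * α)) (Hb.R α β) := Hb.R_mem α β

lemma Pm_mem (α β : G) :
    Hb.mem2 (Hb.H α (-(⅟(2:G) * β))) (Hb.H β (⅟(2:G) * (-α))) (Hb.Pm α β) := by
  refine Hb.mem2_map ?_ ?_ (Hb.R_mem2 (-α) β)
  · intro a ha
    have := Hb.S_mem ha
    simpa [neg_neg] using this
  · intro b hb; simpa using hb

lemma Qm_mem (α β : G) :
    Hb.mem2 (Hb.H α (⅟(2:G) * (-β))) (Hb.H β (-(⅟(2:G) * α))) (Hb.Qm α β) := by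
  refine Hb.mem2_map ?_ ?_ (Hb.R_mem2 α (-β))
  · intro a ha; simpa using ha
  · intro b hb
    have := Hb.S_mem hb
    simpa [neg_neg] using this

lemma Tm_mem (α β : G) :
    Hb.mem2 (Hb.H α (-(⅟(2:G) * (-β)))) (Hb.H β (-(⅟(2:G) * (-α)))) (Hb.Tm α β) := by
  refine Hb.mem2_map ?_ ?_ (Hb.R_mem2 (-α) (-β))
  · intro a ha
    have := Hb.S_mem ha
    simpa [neg_neg] using this
  · intro b hb
    have := Hb.S_mem hb
    simpa [neg_neg] using this

lemma wA_mem (β : G) : Hb.wA β ∈ Hb.H β (⅟(2:G) * 0) := by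
  refine Hb.mem2_ind (P := fun x => TensorProduct.lid k Hb.A
    (TensorProduct.map (Hb.counit (⅟(2:G) * β)) LinearMap.id x) ∈ Hb.H β (⅟(2:G) * 0))
    ?_ ?_ ?_ _ (Hb.R_mem2 0 β)
  · simp
  · intro u v hu hv
    simpa [map_add] using (Hb.H β (⅟(2:G) * 0)).add_mem hu hv
  · intro a _ b hb
    simpa using (Hb.H β (⅟(2:G) * 0)).smul_mem _ hb

lemma uA_mem (α : G) : Hb.uA α ∈ Hb.H α (⅟(2:G) * 0) := by
  refine Hb.mem2_ind (P := fun x => TensorProduct.rid k Hb.A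
    (TensorProduct.map LinearMap.id (Hb.counit (⅟(2:G) * α)) x) ∈ Hb.H α (⅟(2:G) * 0))
    ?_ ?_ ?_ _ (Hb.R_mem2 α 0)
  · simp
  · intro u v hu hv
    simpa [map_add] using (Hb.H α (⅟(2:G) * 0)).add_mem hu hv
  · intro a ha b _
    simpa using (Hb.H α (⅟(2:G) * 0)).smul_mem _ ha

lemma one_ne_zero' : Hb.one 0 ≠ 0 := by
  intro h
  have h2 := Hb.counit_one
  rw [h, map_zero] at h2
  exact zero_ne_one h2

lemma S_one (α : G) : Hb.S α 0 (Hb.one α) = Hb.one (-α) := by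
  have h := Hb.antipode_left (-α) 0 (Hb.one 0) (Hb.one_mem 0)
  simp only [neg_neg] at h
  have hco := Hb.comul_one α (-α)
  rw [add_neg_cancel] at hco
  rw [hco, Hb.counit_one, one_smul] at h
  simp only [TensorProduct.map_tmul, TensorProduct.lift.tmul, LinearMap.id_coe, id_eq] at h
  have hmem : Hb.S α 0 (Hb.one α) ∈ Hb.H (-α) (-0 : G) := Hb.S_mem (Hb.one_mem α)
  rw [neg_zero] at hmem
  rw [Hb.mul_one' hmem] at h
  exact h

/-- (R9-type identity): `P_{α,β} · R_{α,β} = 1_α ⊗ w_β`. -/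
lemma idA (α β : G) :
    tmulMul Hb.mul Hb.mul (Hb.Pm α β) (Hb.R α β) = Hb.one α ⊗ₜ[k] Hb.wA β := by
  have h := Hb.comul_R_left (-α) α β
  rw [neg_add_cancel] at h
  calc tmulMul Hb.mul Hb.mul (Hb.Pm α β) (Hb.R α β)
      = TensorProduct.map (TensorProduct.lift Hb.mul ∘ₗ
            TensorProduct.map (Hb.S (-α) (⅟(2:G) * β)) LinearMap.id) LinearMap.id
          (TensorProduct.map LinearMap.id (TensorProduct.lift Hb.mul)
            (TensorProduct.tensorTensorTensorComm k Hb.A Hb.A Hb.A Hb.A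
              (Hb.R (-α) β ⊗ₜ[k] Hb.R α β))) := (Hb.PL_A _ _ _).symm
    _ = TensorProduct.map (TensorProduct.lift Hb.mul ∘ₗ
            TensorProduct.map (Hb.S (-α) (⅟(2:G) * β)) LinearMap.id) LinearMap.id
          (TensorProduct.map (Hb.comul (-α) α) LinearMap.id (Hb.R 0 β)) := by rw [h]
    _ = TensorProduct.map ((TensorProduct.lift Hb.mul ∘ₗ
            TensorProduct.map (Hb.S (-α) (⅟(2:G) * β)) LinearMap.id) ∘ₗ
            Hb.comul (-α) α) LinearMap.id (Hb.R 0 β) := map_fst_fst _ _ _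
    _ = TensorProduct.map (LinearMap.smulRight (Hb.counit (⅟(2:G) * β)) (Hb.one α))
          LinearMap.id (Hb.R 0 β) := by
          refine Hb.mapl_congr (Hb.R_mem2 0 β) ?_
          intro a ha
          simp only [LinearMap.coe_comp, Function.comp_apply, LinearMap.smulRight_apply]
          exact Hb.antipode_left α (⅟(2:G) * β) a ha
    _ = Hb.one α ⊗ₜ[k] Hb.wA β := by rw [map_smulRight_l]; rfl

/-- `R_{α,β} · P_{α,β} = 1_α ⊗ w_β`. -/
lemma idA' (α β : G) :
    tmulMul Hb.mul Hb.mul (Hb.R α β) (Hb.Pm α β) = Hb.one α ⊗ₜ[k] Hb.wA β := by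
  have h := Hb.comul_R_left α (-α) β
  rw [add_neg_cancel] at h
  calc tmulMul Hb.mul Hb.mul (Hb.R α β) (Hb.Pm α β)
      = TensorProduct.map (TensorProduct.lift Hb.mul ∘ₗ
            TensorProduct.map LinearMap.id (Hb.S (-α) (⅟(2:G) * β))) LinearMap.id
          (TensorProduct.map LinearMap.id (TensorProduct.lift Hb.mul)
            (TensorProduct.tensorTensorTensorComm k Hb.A Hb.A Hb.A Hb.A
              (Hb.R α β ⊗ₜ[k] Hb.R (-α) β))) := (Hb.PL_A' _ _ _).symm
    _ = TensorProduct.map (TensorProduct.lift Hb.mul ∘ₗ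
            TensorProduct.map LinearMap.id (Hb.S (-α) (⅟(2:G) * β))) LinearMap.id
          (TensorProduct.map (Hb.comul α (-α)) LinearMap.id (Hb.R 0 β)) := by rw [h]
    _ = TensorProduct.map ((TensorProduct.lift Hb.mul ∘ₗ
            TensorProduct.map LinearMap.id (Hb.S (-α) (⅟(2:G) * β))) ∘ₗ
            Hb.comul α (-α)) LinearMap.id (Hb.R 0 β) := map_fst_fst _ _ _
    _ = TensorProduct.map (LinearMap.smulRight (Hb.counit (⅟(2:G) * β)) (Hb.one α))
          LinearMap.id (Hb.R 0 β) := by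
          refine Hb.mapl_congr (Hb.R_mem2 0 β) ?_
          intro a ha
          simp only [LinearMap.coe_comp, Function.comp_apply, LinearMap.smulRight_apply]
          exact Hb.antipode_right α (⅟(2:G) * β) a ha
    _ = Hb.one α ⊗ₜ[k] Hb.wA β := by rw [map_smulRight_l]; rfl

/-- `Q_{α,β} ⋆ R_{α,β} = u_α ⊗ 1_β` (product opposite in the second leg). -/
lemma idC' (α β : G) :
    tmulMul Hb.mul Hb.mul.flip (Hb.Qm α β) (Hb.R α β) = Hb.uA α ⊗ₜ[k] Hb.one β := by
  have h := Hb.comul_R_right α β (-β)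
  rw [add_neg_cancel] at h
  calc tmulMul Hb.mul Hb.mul.flip (Hb.Qm α β) (Hb.R α β)
      = TensorProduct.map LinearMap.id (TensorProduct.lift Hb.mul ∘ₗ
            TensorProduct.map LinearMap.id (Hb.S (-β) (⅟(2:G) * α)))
          (TensorProduct.map (TensorProduct.lift Hb.mul)
            (TensorProduct.comm k Hb.A Hb.A).toLinearMap
            (TensorProduct.tensorTensorTensorComm k Hb.A Hb.A Hb.A Hb.A
              (Hb.R α (-β) ⊗ₜ[k] Hb.R α β))) := (Hb.PL_C _ _ _).symm
    _ = TensorProduct.map LinearMap.id (TensorProduct.lift Hb.mul ∘ₗ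
            TensorProduct.map LinearMap.id (Hb.S (-β) (⅟(2:G) * α)))
          (TensorProduct.map LinearMap.id (Hb.comul β (-β)) (Hb.R α 0)) := by rw [h]
    _ = TensorProduct.map LinearMap.id ((TensorProduct.lift Hb.mul ∘ₗ
            TensorProduct.map LinearMap.id (Hb.S (-β) (⅟(2:G) * α))) ∘ₗ
            Hb.comul β (-β)) (Hb.R α 0) := map_snd_snd _ _ _
    _ = TensorProduct.map LinearMap.id
          (LinearMap.smulRight (Hb.counit (⅟(2:G) * α)) (Hb.one β)) (Hb.R α 0) := by
          refine Hb.mapr_congr (Hb.R_mem2 α 0) ?_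
          intro b hb
          simp only [LinearMap.coe_comp, Function.comp_apply, LinearMap.smulRight_apply]
          exact Hb.antipode_right β (⅟(2:G) * α) b hb
    _ = Hb.uA α ⊗ₜ[k] Hb.one β := by rw [map_smulRight_r]; rfl

/-- `(1_α ⊗ w_β) · R_{α,β} = R_{α,β}` in one-leg multiplier form. -/
lemma idF1 (α β : G) :
    TensorProduct.map LinearMap.id (Hb.mul (Hb.wA β)) (Hb.R α β) = Hb.R α β := by
  have h := Hb.comul_R_left 0 α β
  rw [zero_add] at h
  calc TensorProduct.map LinearMap.id (Hb.mul (Hb.wA β)) (Hb.R α β)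
      = TensorProduct.map ((TensorProduct.lid k Hb.A).toLinearMap ∘ₗ
            TensorProduct.map (Hb.counit (⅟(2:G) * β)) LinearMap.id) LinearMap.id
          (TensorProduct.map LinearMap.id (TensorProduct.lift Hb.mul)
            (TensorProduct.tensorTensorTensorComm k Hb.A Hb.A Hb.A Hb.A
              (Hb.R 0 β ⊗ₜ[k] Hb.R α β))) := (Hb.PL_F1 _ _ _).symm
    _ = TensorProduct.map ((TensorProduct.lid k Hb.A).toLinearMap ∘ₗ
            TensorProduct.map (Hb.counit (⅟(2:G) * β)) LinearMap.id) LinearMap.id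
          (TensorProduct.map (Hb.comul 0 α) LinearMap.id (Hb.R α β)) := by rw [h]
    _ = TensorProduct.map (((TensorProduct.lid k Hb.A).toLinearMap ∘ₗ
            TensorProduct.map (Hb.counit (⅟(2:G) * β)) LinearMap.id) ∘ₗ
            Hb.comul 0 α) LinearMap.id (Hb.R α β) := map_fst_fst _ _ _
    _ = TensorProduct.map LinearMap.id LinearMap.id (Hb.R α β) := by
          refine Hb.mapl_congr (Hb.R_mem2 α β) ?_
          intro a ha
          simp only [LinearMap.coe_comp, Function.comp_apply, LinearMap.id_coe, id_eq,
            LinearEquiv.coe_coe]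
          exact Hb.counit_comul α (⅟(2:G) * β) a ha
    _ = Hb.R α β := by rw [TensorProduct.map_id]; rfl

/-- `R_{α,β} · (u_α ⊗ 1_β) = R_{α,β}` in one-leg multiplier form. -/
lemma idF4 (α β : G) :
    TensorProduct.map (Hb.mul.flip (Hb.uA α)) LinearMap.id (Hb.R α β) = Hb.R α β := by
  have h := Hb.comul_R_right α 0 β
  rw [zero_add] at h
  calc TensorProduct.map (Hb.mul.flip (Hb.uA α)) LinearMap.id (Hb.R α β)
      = TensorProduct.map LinearMap.id ((TensorProduct.lid k Hb.A).toLinearMap ∘ₗ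
            TensorProduct.map (Hb.counit (⅟(2:G) * α)) LinearMap.id)
          (TensorProduct.map (TensorProduct.lift Hb.mul)
            (TensorProduct.comm k Hb.A Hb.A).toLinearMap
            (TensorProduct.tensorTensorTensorComm k Hb.A Hb.A Hb.A Hb.A
              (Hb.R α β ⊗ₜ[k] Hb.R α 0))) := (Hb.PL_F4 _ _ _).symm
    _ = TensorProduct.map LinearMap.id ((TensorProduct.lid k Hb.A).toLinearMap ∘ₗ
            TensorProduct.map (Hb.counit (⅟(2:G) * α)) LinearMap.id)
          (TensorProduct.map LinearMap.id (Hb.comul 0 β) (Hb.R α β)) := by rw [h]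
    _ = TensorProduct.map LinearMap.id (((TensorProduct.lid k Hb.A).toLinearMap ∘ₗ
            TensorProduct.map (Hb.counit (⅟(2:G) * α)) LinearMap.id) ∘ₗ
            Hb.comul 0 β) (Hb.R α β) := map_snd_snd _ _ _
    _ = TensorProduct.map LinearMap.id LinearMap.id (Hb.R α β) := by
          refine Hb.mapr_congr (Hb.R_mem2 α β) ?_
          intro b hb
          simp only [LinearMap.coe_comp, Function.comp_apply, LinearMap.id_coe, id_eq,
            LinearEquiv.coe_coe]
          exact Hb.counit_comul β (⅟(2:G) * α) b hb
    _ = Hb.R α β := by rw [TensorProduct.map_id]; rfl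

end RibbonHopfGBialgebra
namespace RibbonHopfGBialgebra

open LinearMap

variable {k G : Type*} [Field k] [CommRing G] [Invertible (2 : G)]
  (Hb : RibbonHopfGBialgebra k G)

/-- pulling a right multiplier on the first leg out of a graded product -/
lemma sub_right_mul {α β a b c d e : G} {u : Hb.A} (hu : u ∈ Hb.H α e)
    {X Y : Hb.A ⊗[k] Hb.A} (hX : Hb.mem2 (Hb.H α a) (Hb.H β b) X)
    (hY : Hb.mem2 (Hb.H α c) (Hb.H β d) Y) :
    tmulMul Hb.mul Hb.mul X (TensorProduct.map (Hb.mul.flip u) LinearMap.id Y) =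
      TensorProduct.map (Hb.mul.flip u) LinearMap.id (tmulMul Hb.mul Hb.mul X Y) := by
  refine Hb.mem2_ind (P := fun X => tmulMul Hb.mul Hb.mul X
    (TensorProduct.map (Hb.mul.flip u) LinearMap.id Y) =
    TensorProduct.map (Hb.mul.flip u) LinearMap.id (tmulMul Hb.mul Hb.mul X Y)) ?_ ?_ ?_ X hX
  · simp
  · intro x y hx hy
    simp only [map_add, LinearMap.add_apply, hx, hy]
  · intro p hp p' hp'
    refine Hb.mem2_ind (P := fun Y => tmulMul Hb.mul Hb.mul (p ⊗ₜ[k] p')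
      (TensorProduct.map (Hb.mul.flip u) LinearMap.id Y) =
      TensorProduct.map (Hb.mul.flip u) LinearMap.id
        (tmulMul Hb.mul Hb.mul (p ⊗ₜ[k] p') Y)) ?_ ?_ ?_ Y hY
    · simp
    · intro x y hx hy
      simp only [map_add, LinearMap.map_add, hx, hy]
    · intro y hy y' _
      simp only [TensorProduct.map_tmul, tmulMul_tmul, LinearMap.flip_apply,
        LinearMap.id_coe, id_eq]
      rw [Hb.mul_assoc' hp hy hu]

/-- pulling a left multiplier on the second leg out of a `⋆`-product -/
lemma sub_left_mul {α β a b c d e : G} {w : Hb.A} (hw : w ∈ Hb.H β e)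
    {X Y : Hb.A ⊗[k] Hb.A} (hX : Hb.mem2 (Hb.H α a) (Hb.H β b) X)
    (hY : Hb.mem2 (Hb.H α c) (Hb.H β d) Y) :
    tmulMul Hb.mul Hb.mul.flip X (TensorProduct.map LinearMap.id (Hb.mul w) Y) =
      TensorProduct.map LinearMap.id (Hb.mul w) (tmulMul Hb.mul Hb.mul.flip X Y) := by
  refine Hb.mem2_ind (P := fun X => tmulMul Hb.mul Hb.mul.flip X
    (TensorProduct.map LinearMap.id (Hb.mul w) Y) =
    TensorProduct.map LinearMap.id (Hb.mul w) (tmulMul Hb.mul Hb.mul.flip X Y)) ?_ ?_ ?_ X hX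
  · simp
  · intro x y hx hy
    simp only [map_add, LinearMap.add_apply, hx, hy]
  · intro q hq q' hq'
    refine Hb.mem2_ind (P := fun Y => tmulMul Hb.mul Hb.mul.flip (q ⊗ₜ[k] q')
      (TensorProduct.map LinearMap.id (Hb.mul w) Y) =
      TensorProduct.map LinearMap.id (Hb.mul w)
        (tmulMul Hb.mul Hb.mul.flip (q ⊗ₜ[k] q') Y)) ?_ ?_ ?_ Y hY
    · simp
    · intro x y hx hy
      simp only [map_add, LinearMap.map_add, hx, hy]
    · intro y _ y' hy'
      simp only [TensorProduct.map_tmul, tmulMul_tmul, LinearMap.flip_apply,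
        LinearMap.id_coe, id_eq]
      rw [Hb.mul_assoc' hw hy' hq']

/-- `u_α ⊗ w_β = 1_α ⊗ w_β` -/
lemma uw_left (α β : G) : Hb.uA α ⊗ₜ[k] Hb.wA β = Hb.one α ⊗ₜ[k] Hb.wA β := by
  have h1 : tmulMul Hb.mul Hb.mul (Hb.Pm α β)
      (TensorProduct.map (Hb.mul.flip (Hb.uA α)) LinearMap.id (Hb.R α β)) =
      Hb.one α ⊗ₜ[k] Hb.wA β := by
    rw [Hb.idF4, Hb.idA]
  rw [Hb.sub_right_mul (Hb.uA_mem α) (Hb.Pm_mem α β) (Hb.R_mem2 α β)] at h1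
  rw [Hb.idA] at h1
  simp only [TensorProduct.map_tmul, LinearMap.flip_apply, LinearMap.id_coe, id_eq] at h1
  rw [Hb.one_mul' (Hb.uA_mem α)] at h1
  exact h1

/-- `u_α ⊗ w_β = u_α ⊗ 1_β` -/
lemma uw_right (α β : G) : Hb.uA α ⊗ₜ[k] Hb.wA β = Hb.uA α ⊗ₜ[k] Hb.one β := by
  have h1 : tmulMul Hb.mul Hb.mul.flip (Hb.Qm α β)
      (TensorProduct.map LinearMap.id (Hb.mul (Hb.wA β)) (Hb.R α β)) =
      Hb.uA α ⊗ₜ[k] Hb.one β := by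
    rw [Hb.idF1, Hb.idC']
  rw [Hb.sub_left_mul (Hb.wA_mem β) (Hb.Qm_mem α β) (Hb.R_mem2 α β)] at h1
  rw [Hb.idC'] at h1
  simp only [TensorProduct.map_tmul, LinearMap.id_coe, id_eq] at h1
  rw [Hb.mul_one' (Hb.wA_mem β)] at h1
  exact h1

/-- scalar obtained by applying counits to both legs -/
noncomputable def eps2 : Hb.A ⊗[k] Hb.A →ₗ[k] k :=
  (TensorProduct.lid k k).toLinearMap ∘ₗ TensorProduct.map (Hb.counit 0) (Hb.counit 0)

@[simp] lemma eps2_tmul (x y : Hb.A) :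
    Hb.eps2 (x ⊗ₜ[k] y) = Hb.counit 0 x * Hb.counit 0 y := by
  simp [eps2, TensorProduct.lid_tmul, smul_eq_mul]

lemma w_eq (β : G) : Hb.wA β = Hb.counit 0 (Hb.uA 0) • Hb.one β := by
  have h3 : (Hb.one 0) ⊗ₜ[k] Hb.wA β = Hb.uA 0 ⊗ₜ[k] Hb.one β :=
    (Hb.uw_left 0 β).symm.trans (Hb.uw_right 0 β)
  have h4 := congrArg (fun z => TensorProduct.lid k Hb.A
    (TensorProduct.map (Hb.counit 0) LinearMap.id z)) h3
  simpa [Hb.counit_one] using h4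

lemma u_eq (α : G) : Hb.uA α = Hb.counit 0 (Hb.uA 0) • Hb.one α := by
  have h3 : Hb.uA α ⊗ₜ[k] Hb.one 0 = Hb.one α ⊗ₜ[k] Hb.wA 0 :=
    (Hb.uw_right α 0).symm.trans (Hb.uw_left α 0)
  have h4 := congrArg (fun z => TensorProduct.rid k Hb.A
    (TensorProduct.map LinearMap.id (Hb.counit 0) z)) h3
  have h5 : Hb.counit 0 (Hb.wA 0) = Hb.counit 0 (Hb.uA 0) := by
    rw [Hb.w_eq 0, map_smul, Hb.counit_one, smul_eq_mul, mul_one]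
  simpa [Hb.counit_one, h5] using h4

lemma c_one : Hb.counit 0 (Hb.uA 0) = 1 := by
  set c := Hb.counit 0 (Hb.uA 0) with hc
  have hidem : c * c = c := by
    have h := Hb.uw_right 0 0
    have h2 := congrArg Hb.eps2 h
    simp only [eps2_tmul] at h2
    have hw : Hb.counit 0 (Hb.wA 0) = c := by
      rw [Hb.w_eq 0, map_smul, Hb.counit_one, smul_eq_mul, mul_one]
    rw [hw, Hb.counit_one, mul_one] at h2
    exact h2
  have hne : c ≠ 0 := by
    intro h0
    have hw0 : Hb.wA 0 = 0 := by rw [Hb.w_eq 0, ← hc, h0, zero_smul]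
    have hR : Hb.R 0 0 = 0 := by
      have h1 := Hb.idF1 0 0
      rw [hw0, map_zero] at h1
      rw [← h1]
      simp
    have h11 := Hb.R_Rinv 0 0
    rw [hR, map_zero, LinearMap.zero_apply] at h11
    have h12 := congrArg Hb.eps2 h11
    simp only [eps2_tmul, map_zero, Hb.counit_one, mul_one] at h12
    exact zero_ne_one h12
  exact mul_left_cancel₀ hne (hidem.trans (mul_one c).symm)

lemma w_one (β : G) : Hb.wA β = Hb.one β := by rw [Hb.w_eq, Hb.c_one, one_smul]

lemma u_one (α : G) : Hb.uA α = Hb.one α := by rw [Hb.u_eq, Hb.c_one, one_smul]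

/-- `P · R = 1 ⊗ 1` -/
lemma idA1 (α β : G) :
    tmulMul Hb.mul Hb.mul (Hb.Pm α β) (Hb.R α β) = Hb.one α ⊗ₜ[k] Hb.one β := by
  rw [Hb.idA, Hb.w_one]

/-- `R · P = 1 ⊗ 1` -/
lemma idA1' (α β : G) :
    tmulMul Hb.mul Hb.mul (Hb.R α β) (Hb.Pm α β) = Hb.one α ⊗ₜ[k] Hb.one β := by
  rw [Hb.idA', Hb.w_one]

end RibbonHopfGBialgebra
namespace RibbonHopfGBialgebra

set_option synthInstance.maxHeartbeats 1000000
set_option maxHeartbeats 1600000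

open LinearMap

variable {k G : Type*} [Field k] [CommRing G] [Invertible (2 : G)]
  (Hb : RibbonHopfGBialgebra k G)

/-- three-leg graded membership -/
def mem3 (p q r : Submodule k Hb.A) (x : Hb.A ⊗[k] (Hb.A ⊗[k] Hb.A)) : Prop :=
  x ∈ LinearMap.range (TensorProduct.map p.subtype (TensorProduct.map q.subtype r.subtype))

lemma mem3_ind {p q r : Submodule k Hb.A} {P : Hb.A ⊗[k] (Hb.A ⊗[k] Hb.A) → Prop}
    (h0 : P 0) (hadd : ∀ u v, P u → P v → P (u + v))
    (ht : ∀ a ∈ p, ∀ b ∈ q, ∀ c ∈ r, P (a ⊗ₜ[k] (b ⊗ₜ[k] c))) :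
    ∀ x, Hb.mem3 p q r x → P x := by
  rintro x ⟨y, rfl⟩
  induction y with
  | zero => simpa using h0
  | add u v hu hv => simpa using hadd _ _ hu hv
  | tmul a z =>
    simp only [TensorProduct.map_tmul]
    induction z with
    | zero => simpa using h0
    | add u v hu hv =>
      simp only [map_add, TensorProduct.tmul_add]
      exact hadd _ _ hu hv
    | tmul b c => simpa using ht a a.2 b b.2 c c.2

lemma mem3_tmul {p q r : Submodule k Hb.A} {a : Hb.A} {z : Hb.A ⊗[k] Hb.A}
    (ha : a ∈ p) (hz : Hb.mem2 q r z) : Hb.mem3 p q r (a ⊗ₜ[k] z) := by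
  obtain ⟨y, rfl⟩ := hz
  exact ⟨(⟨a, ha⟩ : p) ⊗ₜ[k] y, by simp⟩

lemma mem3_zero {p q r : Submodule k Hb.A} : Hb.mem3 p q r 0 :=
  (LinearMap.range _).zero_mem

lemma mem3_add {p q r : Submodule k Hb.A} {x y} (hx : Hb.mem3 p q r x)
    (hy : Hb.mem3 p q r y) : Hb.mem3 p q r (x + y) :=
  (LinearMap.range _).add_mem hx hy

/-! ### unit and associativity lemmas for the graded products -/

lemma mm_one_l {α β a b : G} {X : Hb.A ⊗[k] Hb.A} (hX : Hb.mem2 (Hb.H α a) (Hb.H β b) X) :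
    tmulMul Hb.mul Hb.mul (Hb.one α ⊗ₜ[k] Hb.one β) X = X := by
  refine Hb.mem2_ind (P := fun X =>
    tmulMul Hb.mul Hb.mul (Hb.one α ⊗ₜ[k] Hb.one β) X = X) ?_ ?_ ?_ X hX
  · simp
  · intro u v hu hv; simp only [map_add, hu, hv]
  · intro x hx y hy
    simp only [tmulMul_tmul]
    rw [Hb.one_mul' hx, Hb.one_mul' hy]

lemma mm_one_r {α β a b : G} {X : Hb.A ⊗[k] Hb.A} (hX : Hb.mem2 (Hb.H α a) (Hb.H β b) X) :
    tmulMul Hb.mul Hb.mul X (Hb.one α ⊗ₜ[k] Hb.one β) = X := by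
  refine Hb.mem2_ind (P := fun X =>
    tmulMul Hb.mul Hb.mul X (Hb.one α ⊗ₜ[k] Hb.one β) = X) ?_ ?_ ?_ X hX
  · simp
  · intro u v hu hv; simp only [map_add, LinearMap.add_apply, hu, hv]
  · intro x hx y hy
    simp only [tmulMul_tmul]
    rw [Hb.mul_one' hx, Hb.mul_one' hy]

lemma mm_assoc {α β a b c d e f : G} {X Y Z : Hb.A ⊗[k] Hb.A}
    (hX : Hb.mem2 (Hb.H α a) (Hb.H β b) X) (hY : Hb.mem2 (Hb.H α c) (Hb.H β d) Y)
    (hZ : Hb.mem2 (Hb.H α e) (Hb.H β f) Z) :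
    tmulMul Hb.mul Hb.mul (tmulMul Hb.mul Hb.mul X Y) Z =
      tmulMul Hb.mul Hb.mul X (tmulMul Hb.mul Hb.mul Y Z) := by
  refine Hb.mem2_ind (P := fun X => tmulMul Hb.mul Hb.mul (tmulMul Hb.mul Hb.mul X Y) Z =
    tmulMul Hb.mul Hb.mul X (tmulMul Hb.mul Hb.mul Y Z)) ?_ ?_ ?_ X hX
  · simp
  · intro u v hu hv; simp only [map_add, LinearMap.add_apply, hu, hv]
  · intro x hx x' hx'
    refine Hb.mem2_ind (P := fun Y =>
      tmulMul Hb.mul Hb.mul (tmulMul Hb.mul Hb.mul (x ⊗ₜ[k] x') Y) Z =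
      tmulMul Hb.mul Hb.mul (x ⊗ₜ[k] x') (tmulMul Hb.mul Hb.mul Y Z)) ?_ ?_ ?_ Y hY
    · simp
    · intro u v hu hv; simp only [map_add, LinearMap.add_apply, LinearMap.map_add, hu, hv]
    · intro y hy y' hy'
      refine Hb.mem2_ind (P := fun Z =>
        tmulMul Hb.mul Hb.mul (tmulMul Hb.mul Hb.mul (x ⊗ₜ[k] x') (y ⊗ₜ[k] y')) Z =
        tmulMul Hb.mul Hb.mul (x ⊗ₜ[k] x')
          (tmulMul Hb.mul Hb.mul (y ⊗ₜ[k] y') Z)) ?_ ?_ ?_ Z hZ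
      · simp
      · intro u v hu hv; simp only [LinearMap.map_add, hu, hv]
      · intro z hz z' hz'
        simp only [tmulMul_tmul]
        rw [Hb.mul_assoc' hx hy hz, Hb.mul_assoc' hx' hy' hz']

lemma M3_one_l {α β γ a b c : G} {X : Hb.A ⊗[k] (Hb.A ⊗[k] Hb.A)}
    (hX : Hb.mem3 (Hb.H α a) (Hb.H β b) (Hb.H γ c) X) :
    tmulMul Hb.mul (tmulMul Hb.mul Hb.mul)
      (Hb.one α ⊗ₜ[k] (Hb.one β ⊗ₜ[k] Hb.one γ)) X = X := by
  refine Hb.mem3_ind (P := fun X => tmulMul Hb.mul (tmulMul Hb.mul Hb.mul)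
    (Hb.one α ⊗ₜ[k] (Hb.one β ⊗ₜ[k] Hb.one γ)) X = X) ?_ ?_ ?_ X hX
  · simp
  · intro u v hu hv; simp only [map_add, hu, hv]
  · intro x hx y hy z hz
    simp only [tmulMul_tmul]
    rw [Hb.one_mul' hx, Hb.one_mul' hy, Hb.one_mul' hz]

lemma M3_one_r {α β γ a b c : G} {X : Hb.A ⊗[k] (Hb.A ⊗[k] Hb.A)}
    (hX : Hb.mem3 (Hb.H α a) (Hb.H β b) (Hb.H γ c) X) :
    tmulMul Hb.mul (tmulMul Hb.mul Hb.mul) X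
      (Hb.one α ⊗ₜ[k] (Hb.one β ⊗ₜ[k] Hb.one γ)) = X := by
  refine Hb.mem3_ind (P := fun X => tmulMul Hb.mul (tmulMul Hb.mul Hb.mul) X
    (Hb.one α ⊗ₜ[k] (Hb.one β ⊗ₜ[k] Hb.one γ)) = X) ?_ ?_ ?_ X hX
  · simp
  · intro u v hu hv; simp only [map_add, LinearMap.add_apply, hu, hv]
  · intro x hx y hy z hz
    simp only [tmulMul_tmul]
    rw [Hb.mul_one' hx, Hb.mul_one' hy, Hb.mul_one' hz]

lemma M3_assoc {α β γ a b c d e f g' h' i' : G} {X Y Z : Hb.A ⊗[k] (Hb.A ⊗[k] Hb.A)}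
    (hX : Hb.mem3 (Hb.H α a) (Hb.H β b) (Hb.H γ c) X)
    (hY : Hb.mem3 (Hb.H α d) (Hb.H β e) (Hb.H γ f) Y)
    (hZ : Hb.mem3 (Hb.H α g') (Hb.H β h') (Hb.H γ i') Z) :
    tmulMul Hb.mul (tmulMul Hb.mul Hb.mul)
        (tmulMul Hb.mul (tmulMul Hb.mul Hb.mul) X Y) Z =
      tmulMul Hb.mul (tmulMul Hb.mul Hb.mul) X
        (tmulMul Hb.mul (tmulMul Hb.mul Hb.mul) Y Z) := by
  refine Hb.mem3_ind (P := fun X => tmulMul Hb.mul (tmulMul Hb.mul Hb.mul)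
      (tmulMul Hb.mul (tmulMul Hb.mul Hb.mul) X Y) Z =
    tmulMul Hb.mul (tmulMul Hb.mul Hb.mul) X
      (tmulMul Hb.mul (tmulMul Hb.mul Hb.mul) Y Z)) ?_ ?_ ?_ X hX
  · simp
  · intro u v hu hv; simp only [map_add, LinearMap.add_apply, hu, hv]
  · intro x1 hx1 x2 hx2 x3 hx3
    refine Hb.mem3_ind (P := fun Y => tmulMul Hb.mul (tmulMul Hb.mul Hb.mul)
        (tmulMul Hb.mul (tmulMul Hb.mul Hb.mul) (x1 ⊗ₜ[k] (x2 ⊗ₜ[k] x3)) Y) Z =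
      tmulMul Hb.mul (tmulMul Hb.mul Hb.mul) (x1 ⊗ₜ[k] (x2 ⊗ₜ[k] x3))
        (tmulMul Hb.mul (tmulMul Hb.mul Hb.mul) Y Z)) ?_ ?_ ?_ Y hY
    · simp
    · intro u v hu hv
      simp only [map_add, LinearMap.add_apply, LinearMap.map_add, hu, hv]
    · intro y1 hy1 y2 hy2 y3 hy3
      refine Hb.mem3_ind (P := fun Z => tmulMul Hb.mul (tmulMul Hb.mul Hb.mul)
          (tmulMul Hb.mul (tmulMul Hb.mul Hb.mul) (x1 ⊗ₜ[k] (x2 ⊗ₜ[k] x3))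
            (y1 ⊗ₜ[k] (y2 ⊗ₜ[k] y3))) Z =
        tmulMul Hb.mul (tmulMul Hb.mul Hb.mul) (x1 ⊗ₜ[k] (x2 ⊗ₜ[k] x3))
          (tmulMul Hb.mul (tmulMul Hb.mul Hb.mul) (y1 ⊗ₜ[k] (y2 ⊗ₜ[k] y3)) Z)) ?_ ?_ ?_ Z hZ
      · simp
      · intro u v hu hv; simp only [LinearMap.map_add, hu, hv]
      · intro z1 hz1 z2 hz2 z3 hz3
        simp only [tmulMul_tmul]
        rw [Hb.mul_assoc' hx1 hy1 hz1, Hb.mul_assoc' hx2 hy2 hz2, Hb.mul_assoc' hx3 hy3 hz3]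

end RibbonHopfGBialgebra
namespace RibbonHopfGBialgebra

set_option synthInstance.maxHeartbeats 1000000
set_option maxHeartbeats 1600000

open LinearMap

variable {k G : Type*} [Field k] [CommRing G] [Invertible (2 : G)]
  (Hb : RibbonHopfGBialgebra k G)

/-- `Δ_{β,-β}` applied to the second leg is multiplicative -/
lemma comul_mm {α a b c d : G} (β : G) {X Y : Hb.A ⊗[k] Hb.A}
    (hX : Hb.mem2 (Hb.H α a) (Hb.H 0 b) X) (hY : Hb.mem2 (Hb.H α c) (Hb.H 0 d) Y) :
    TensorProduct.map LinearMap.id (Hb.comul β (-β)) (tmulMul Hb.mul Hb.mul X Y) =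
      tmulMul Hb.mul (tmulMul Hb.mul Hb.mul)
        (TensorProduct.map LinearMap.id (Hb.comul β (-β)) X)
        (TensorProduct.map LinearMap.id (Hb.comul β (-β)) Y) := by
  refine Hb.mem2_ind (P := fun X =>
    TensorProduct.map LinearMap.id (Hb.comul β (-β)) (tmulMul Hb.mul Hb.mul X Y) =
    tmulMul Hb.mul (tmulMul Hb.mul Hb.mul)
      (TensorProduct.map LinearMap.id (Hb.comul β (-β)) X)
      (TensorProduct.map LinearMap.id (Hb.comul β (-β)) Y)) ?_ ?_ ?_ X hX
  · simp
  · intro u v hu hv; simp only [map_add, LinearMap.add_apply, hu, hv]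
  · intro p hp p' hp'
    refine Hb.mem2_ind (P := fun Y =>
      TensorProduct.map LinearMap.id (Hb.comul β (-β))
        (tmulMul Hb.mul Hb.mul (p ⊗ₜ[k] p') Y) =
      tmulMul Hb.mul (tmulMul Hb.mul Hb.mul)
        (TensorProduct.map LinearMap.id (Hb.comul β (-β)) (p ⊗ₜ[k] p'))
        (TensorProduct.map LinearMap.id (Hb.comul β (-β)) Y)) ?_ ?_ ?_ Y hY
    · simp
    · intro u v hu hv; simp only [map_add, LinearMap.map_add, hu, hv]
    · intro y hy y' hy'
      simp only [tmulMul_tmul, TensorProduct.map_tmul, LinearMap.id_coe, id_eq]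
      have hp'' : p' ∈ Hb.H (β + -β) b := by rw [add_neg_cancel]; exact hp'
      have hy'' : y' ∈ Hb.H (β + -β) d := by rw [add_neg_cancel]; exact hy'
      rw [Hb.comul_mul β (-β) b d p' y' hp'' hy'', Hb.PL_mm]

lemma Dmem3 {α a b : G} (β : G) {X : Hb.A ⊗[k] Hb.A}
    (hX : Hb.mem2 (Hb.H α a) (Hb.H 0 b) X) :
    Hb.mem3 (Hb.H α a) (Hb.H β b) (Hb.H (-β) b)
      (TensorProduct.map LinearMap.id (Hb.comul β (-β)) X) := by
  refine Hb.mem2_ind (P := fun X => Hb.mem3 (Hb.H α a) (Hb.H β b) (Hb.H (-β) b)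
    (TensorProduct.map LinearMap.id (Hb.comul β (-β)) X)) ?_ ?_ ?_ X hX
  · simpa using Hb.mem3_zero
  · intro u v hu hv; simpa [map_add] using Hb.mem3_add hu hv
  · intro p hp p' hp'
    simp only [TensorProduct.map_tmul, LinearMap.id_coe, id_eq]
    have hp'' : p' ∈ Hb.H (β + -β) b := by rw [add_neg_cancel]; exact hp'
    exact Hb.mem3_tmul hp (Hb.comul_mem hp'')

lemma mem3_rc {α β a b c d : G} {X U : Hb.A ⊗[k] Hb.A}
    (hX : Hb.mem2 (Hb.H α a) (Hb.H (-β) b) X) (hU : Hb.mem2 (Hb.H α c) (Hb.H β d) U) :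
    Hb.mem3 (Hb.H α (a + c)) (Hb.H β d) (Hb.H (-β) b)
      (TensorProduct.map (TensorProduct.lift Hb.mul) (TensorProduct.comm k Hb.A Hb.A).toLinearMap
        (TensorProduct.tensorTensorTensorComm k Hb.A Hb.A Hb.A Hb.A (X ⊗ₜ[k] U))) := by
  refine Hb.mem2_ind (P := fun X => Hb.mem3 (Hb.H α (a + c)) (Hb.H β d) (Hb.H (-β) b)
    (TensorProduct.map (TensorProduct.lift Hb.mul) (TensorProduct.comm k Hb.A Hb.A).toLinearMap
      (TensorProduct.tensorTensorTensorComm k Hb.A Hb.A Hb.A Hb.A (X ⊗ₜ[k] U)))) ?_ ?_ ?_ X hX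
  · simpa using Hb.mem3_zero
  · intro u v hu hv
    simpa [TensorProduct.add_tmul, map_add] using Hb.mem3_add hu hv
  · intro x hx x' hx'
    refine Hb.mem2_ind (P := fun U => Hb.mem3 (Hb.H α (a + c)) (Hb.H β d) (Hb.H (-β) b)
      (TensorProduct.map (TensorProduct.lift Hb.mul)
        (TensorProduct.comm k Hb.A Hb.A).toLinearMap
        (TensorProduct.tensorTensorTensorComm k Hb.A Hb.A Hb.A Hb.A
          ((x ⊗ₜ[k] x') ⊗ₜ[k] U)))) ?_ ?_ ?_ U hU
    · simpa using Hb.mem3_zero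
    · intro u v hu hv
      simpa [TensorProduct.tmul_add, map_add] using Hb.mem3_add hu hv
    · intro u hu u' hu'
      simp only [TensorProduct.tensorTensorTensorComm_tmul, TensorProduct.map_tmul,
        TensorProduct.lift.tmul, LinearEquiv.coe_coe, TensorProduct.comm_tmul]
      exact Hb.mem3_tmul (Hb.mul_mem hx hu) (Hb.mem2_tmul hu' hx')

lemma mem3_ri {α β a b c d : G} {V Y : Hb.A ⊗[k] Hb.A}
    (hV : Hb.mem2 (Hb.H α a) (Hb.H β b) V) (hY : Hb.mem2 (Hb.H α c) (Hb.H (-β) d) Y) :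
    Hb.mem3 (Hb.H α (a + c)) (Hb.H β b) (Hb.H (-β) d)
      (TensorProduct.map (TensorProduct.lift Hb.mul) LinearMap.id
        (TensorProduct.tensorTensorTensorComm k Hb.A Hb.A Hb.A Hb.A (V ⊗ₜ[k] Y))) := by
  refine Hb.mem2_ind (P := fun V => Hb.mem3 (Hb.H α (a + c)) (Hb.H β b) (Hb.H (-β) d)
    (TensorProduct.map (TensorProduct.lift Hb.mul) LinearMap.id
      (TensorProduct.tensorTensorTensorComm k Hb.A Hb.A Hb.A Hb.A (V ⊗ₜ[k] Y)))) ?_ ?_ ?_ V hV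
  · simpa using Hb.mem3_zero
  · intro u v hu hv
    simpa [TensorProduct.add_tmul, map_add] using Hb.mem3_add hu hv
  · intro x hx x' hx'
    refine Hb.mem2_ind (P := fun Y => Hb.mem3 (Hb.H α (a + c)) (Hb.H β b) (Hb.H (-β) d)
      (TensorProduct.map (TensorProduct.lift Hb.mul) LinearMap.id
        (TensorProduct.tensorTensorTensorComm k Hb.A Hb.A Hb.A Hb.A
          ((x ⊗ₜ[k] x') ⊗ₜ[k] Y)))) ?_ ?_ ?_ Y hY
    · simpa using Hb.mem3_zero
    · intro u v hu hv
      simpa [TensorProduct.tmul_add, map_add] using Hb.mem3_add hu hv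
    · intro y hy y' hy'
      simp only [TensorProduct.tensorTensorTensorComm_tmul, TensorProduct.map_tmul,
        TensorProduct.lift.tmul, LinearMap.id_coe, id_eq]
      exact Hb.mem3_tmul (Hb.mul_mem hx hy) (Hb.mem2_tmul hx' hy')

lemma mem3_i13 {α γ a b : G} (β : G) {X : Hb.A ⊗[k] Hb.A}
    (hX : Hb.mem2 (Hb.H α a) (Hb.H γ b) X) :
    Hb.mem3 (Hb.H α a) (Hb.H β 0) (Hb.H γ b)
      (TensorProduct.map LinearMap.id (TensorProduct.mk k Hb.A Hb.A (Hb.one β)) X) := by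
  refine Hb.mem2_ind (P := fun X => Hb.mem3 (Hb.H α a) (Hb.H β 0) (Hb.H γ b)
    (TensorProduct.map LinearMap.id (TensorProduct.mk k Hb.A Hb.A (Hb.one β)) X)) ?_ ?_ ?_ X hX
  · simpa using Hb.mem3_zero
  · intro u v hu hv; simpa [map_add] using Hb.mem3_add hu hv
  · intro x hx y hy
    simp only [TensorProduct.map_tmul, LinearMap.id_coe, id_eq, TensorProduct.mk_apply]
    exact Hb.mem3_tmul hx (Hb.mem2_tmul (Hb.one_mem β) hy)

lemma M3_i13_i13 {α γ a b c d : G} (β : G) {X Y : Hb.A ⊗[k] Hb.A}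
    (hX : Hb.mem2 (Hb.H α a) (Hb.H γ b) X) (hY : Hb.mem2 (Hb.H α c) (Hb.H γ d) Y) :
    tmulMul Hb.mul (tmulMul Hb.mul Hb.mul)
        (TensorProduct.map LinearMap.id (TensorProduct.mk k Hb.A Hb.A (Hb.one β)) X)
        (TensorProduct.map LinearMap.id (TensorProduct.mk k Hb.A Hb.A (Hb.one β)) Y) =
      TensorProduct.map LinearMap.id (TensorProduct.mk k Hb.A Hb.A (Hb.one β))
        (tmulMul Hb.mul Hb.mul X Y) := by
  refine Hb.mem2_ind (P := fun X => tmulMul Hb.mul (tmulMul Hb.mul Hb.mul)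
      (TensorProduct.map LinearMap.id (TensorProduct.mk k Hb.A Hb.A (Hb.one β)) X)
      (TensorProduct.map LinearMap.id (TensorProduct.mk k Hb.A Hb.A (Hb.one β)) Y) =
    TensorProduct.map LinearMap.id (TensorProduct.mk k Hb.A Hb.A (Hb.one β))
      (tmulMul Hb.mul Hb.mul X Y)) ?_ ?_ ?_ X hX
  · simp
  · intro u v hu hv; simp only [map_add, LinearMap.add_apply, hu, hv]
  · intro x hx x' hx'
    refine Hb.mem2_ind (P := fun Y => tmulMul Hb.mul (tmulMul Hb.mul Hb.mul)
        (TensorProduct.map LinearMap.id (TensorProduct.mk k Hb.A Hb.A (Hb.one β))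
          (x ⊗ₜ[k] x'))
        (TensorProduct.map LinearMap.id (TensorProduct.mk k Hb.A Hb.A (Hb.one β)) Y) =
      TensorProduct.map LinearMap.id (TensorProduct.mk k Hb.A Hb.A (Hb.one β))
        (tmulMul Hb.mul Hb.mul (x ⊗ₜ[k] x') Y)) ?_ ?_ ?_ Y hY
    · simp
    · intro u v hu hv; simp only [map_add, LinearMap.map_add, hu, hv]
    · intro y hy y' hy'
      simp only [TensorProduct.map_tmul, LinearMap.id_coe, id_eq, TensorProduct.mk_apply,
        tmulMul_tmul]
      rw [Hb.one_mul' (Hb.one_mem β)]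

/-- key rearrangement: `Z · W = (ι₁₃ X) ((ι₁₂ (U·V)) (ι₁₃ Y))` -/
lemma G1 {α β x1 x2 u1 u2 v1 v2 y1 y2 : G} {X U V Y : Hb.A ⊗[k] Hb.A}
    (hX : Hb.mem2 (Hb.H α x1) (Hb.H (-β) x2) X)
    (hU : Hb.mem2 (Hb.H α u1) (Hb.H β u2) U)
    (hV : Hb.mem2 (Hb.H α v1) (Hb.H β v2) V)
    (hY : Hb.mem2 (Hb.H α y1) (Hb.H (-β) y2) Y) :
    tmulMul Hb.mul (tmulMul Hb.mul Hb.mul)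
        (TensorProduct.map (TensorProduct.lift Hb.mul)
          (TensorProduct.comm k Hb.A Hb.A).toLinearMap
          (TensorProduct.tensorTensorTensorComm k Hb.A Hb.A Hb.A Hb.A (X ⊗ₜ[k] U)))
        (TensorProduct.map (TensorProduct.lift Hb.mul) LinearMap.id
          (TensorProduct.tensorTensorTensorComm k Hb.A Hb.A Hb.A Hb.A (V ⊗ₜ[k] Y))) =
      tmulMul Hb.mul (tmulMul Hb.mul Hb.mul)
        (TensorProduct.map LinearMap.id (TensorProduct.mk k Hb.A Hb.A (Hb.one β)) X)
        (tmulMul Hb.mul (tmulMul Hb.mul Hb.mul)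
          (TensorProduct.map LinearMap.id
            ((TensorProduct.mk k Hb.A Hb.A).flip (Hb.one (-β)))
            (tmulMul Hb.mul Hb.mul U V))
          (TensorProduct.map LinearMap.id (TensorProduct.mk k Hb.A Hb.A (Hb.one β)) Y)) := by
  refine Hb.mem2_ind (P := fun X => tmulMul Hb.mul (tmulMul Hb.mul Hb.mul)
      (TensorProduct.map (TensorProduct.lift Hb.mul)
        (TensorProduct.comm k Hb.A Hb.A).toLinearMap
        (TensorProduct.tensorTensorTensorComm k Hb.A Hb.A Hb.A Hb.A (X ⊗ₜ[k] U)))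
      (TensorProduct.map (TensorProduct.lift Hb.mul) LinearMap.id
        (TensorProduct.tensorTensorTensorComm k Hb.A Hb.A Hb.A Hb.A (V ⊗ₜ[k] Y))) =
    tmulMul Hb.mul (tmulMul Hb.mul Hb.mul)
      (TensorProduct.map LinearMap.id (TensorProduct.mk k Hb.A Hb.A (Hb.one β)) X)
      (tmulMul Hb.mul (tmulMul Hb.mul Hb.mul)
        (TensorProduct.map LinearMap.id
          ((TensorProduct.mk k Hb.A Hb.A).flip (Hb.one (-β)))
          (tmulMul Hb.mul Hb.mul U V))
        (TensorProduct.map LinearMap.id (TensorProduct.mk k Hb.A Hb.A (Hb.one β)) Y)))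
    ?_ ?_ ?_ X hX
  · simp
  · intro u v hu hv
    simp only [TensorProduct.add_tmul, map_add, LinearMap.add_apply, hu, hv]
  · intro xa hxa xb hxb
    refine Hb.mem2_ind (P := fun U => tmulMul Hb.mul (tmulMul Hb.mul Hb.mul)
        (TensorProduct.map (TensorProduct.lift Hb.mul)
          (TensorProduct.comm k Hb.A Hb.A).toLinearMap
          (TensorProduct.tensorTensorTensorComm k Hb.A Hb.A Hb.A Hb.A
            ((xa ⊗ₜ[k] xb) ⊗ₜ[k] U)))
        (TensorProduct.map (TensorProduct.lift Hb.mul) LinearMap.id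
          (TensorProduct.tensorTensorTensorComm k Hb.A Hb.A Hb.A Hb.A (V ⊗ₜ[k] Y))) =
      tmulMul Hb.mul (tmulMul Hb.mul Hb.mul)
        (TensorProduct.map LinearMap.id (TensorProduct.mk k Hb.A Hb.A (Hb.one β))
          (xa ⊗ₜ[k] xb))
        (tmulMul Hb.mul (tmulMul Hb.mul Hb.mul)
          (TensorProduct.map LinearMap.id
            ((TensorProduct.mk k Hb.A Hb.A).flip (Hb.one (-β)))
            (tmulMul Hb.mul Hb.mul U V))
          (TensorProduct.map LinearMap.id (TensorProduct.mk k Hb.A Hb.A (Hb.one β)) Y)))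
      ?_ ?_ ?_ U hU
    · simp
    · intro u v hu hv
      simp only [TensorProduct.tmul_add, map_add, LinearMap.add_apply, LinearMap.map_add,
        hu, hv]
    · intro uc huc ud hud
      refine Hb.mem2_ind (P := fun V => tmulMul Hb.mul (tmulMul Hb.mul Hb.mul)
          (TensorProduct.map (TensorProduct.lift Hb.mul)
            (TensorProduct.comm k Hb.A Hb.A).toLinearMap
            (TensorProduct.tensorTensorTensorComm k Hb.A Hb.A Hb.A Hb.A
              ((xa ⊗ₜ[k] xb) ⊗ₜ[k] (uc ⊗ₜ[k] ud))))
          (TensorProduct.map (TensorProduct.lift Hb.mul) LinearMap.id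
            (TensorProduct.tensorTensorTensorComm k Hb.A Hb.A Hb.A Hb.A (V ⊗ₜ[k] Y))) =
        tmulMul Hb.mul (tmulMul Hb.mul Hb.mul)
          (TensorProduct.map LinearMap.id (TensorProduct.mk k Hb.A Hb.A (Hb.one β))
            (xa ⊗ₜ[k] xb))
          (tmulMul Hb.mul (tmulMul Hb.mul Hb.mul)
            (TensorProduct.map LinearMap.id
              ((TensorProduct.mk k Hb.A Hb.A).flip (Hb.one (-β)))
              (tmulMul Hb.mul Hb.mul (uc ⊗ₜ[k] ud) V))
            (TensorProduct.map LinearMap.id (TensorProduct.mk k Hb.A Hb.A (Hb.one β)) Y)))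
        ?_ ?_ ?_ V hV
      · simp
      · intro u v hu hv
        simp only [map_add, LinearMap.add_apply, LinearMap.map_add, hu, hv,
          TensorProduct.add_tmul]
      · intro vq hvq vq' hvq'
        refine Hb.mem2_ind (P := fun Y => tmulMul Hb.mul (tmulMul Hb.mul Hb.mul)
            (TensorProduct.map (TensorProduct.lift Hb.mul)
              (TensorProduct.comm k Hb.A Hb.A).toLinearMap
              (TensorProduct.tensorTensorTensorComm k Hb.A Hb.A Hb.A Hb.A
                ((xa ⊗ₜ[k] xb) ⊗ₜ[k] (uc ⊗ₜ[k] ud))))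
            (TensorProduct.map (TensorProduct.lift Hb.mul) LinearMap.id
              (TensorProduct.tensorTensorTensorComm k Hb.A Hb.A Hb.A Hb.A
                ((vq ⊗ₜ[k] vq') ⊗ₜ[k] Y))) =
          tmulMul Hb.mul (tmulMul Hb.mul Hb.mul)
            (TensorProduct.map LinearMap.id (TensorProduct.mk k Hb.A Hb.A (Hb.one β))
              (xa ⊗ₜ[k] xb))
            (tmulMul Hb.mul (tmulMul Hb.mul Hb.mul)
              (TensorProduct.map LinearMap.id
                ((TensorProduct.mk k Hb.A Hb.A).flip (Hb.one (-β)))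
                (tmulMul Hb.mul Hb.mul (uc ⊗ₜ[k] ud) (vq ⊗ₜ[k] vq')))
              (TensorProduct.map LinearMap.id (TensorProduct.mk k Hb.A Hb.A (Hb.one β)) Y)))
          ?_ ?_ ?_ Y hY
        · simp
        · intro u v hu hv
          simp only [map_add, LinearMap.map_add, hu, hv, TensorProduct.tmul_add]
        · intro yp hyp yp' hyp'
          simp only [TensorProduct.tensorTensorTensorComm_tmul, TensorProduct.map_tmul,
            TensorProduct.lift.tmul, LinearEquiv.coe_coe, TensorProduct.comm_tmul,
            LinearMap.id_coe, id_eq, TensorProduct.mk_apply, LinearMap.flip_apply,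
            tmulMul_tmul]
          rw [Hb.mul_one' (Hb.mul_mem hud hvq'), Hb.one_mul' (Hb.mul_mem hud hvq'),
            Hb.one_mul' hyp', Hb.mul_assoc' hxa huc (Hb.mul_mem hvq hyp),
            ← Hb.mul_assoc' huc hvq hyp]

end RibbonHopfGBialgebra
namespace RibbonHopfGBialgebra

set_option synthInstance.maxHeartbeats 1000000
set_option maxHeartbeats 1600000

open LinearMap

variable {k G : Type*} [Field k] [CommRing G] [Invertible (2 : G)]
  (Hb : RibbonHopfGBialgebra k G)

/-- `P_{α,β} · (S ⊗ S)(R_{-α,-β}) = 1_α ⊗ 1_β`. -/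
lemma PT (α β : G) :
    tmulMul Hb.mul Hb.mul (Hb.Pm α β) (Hb.Tm α β) = Hb.one α ⊗ₜ[k] Hb.one β := by
  have hco : Hb.comul β (-β) (Hb.one 0) = Hb.one β ⊗ₜ[k] Hb.one (-β) := by
    have h := Hb.comul_one β (-β); rwa [add_neg_cancel] at h
  set Z := TensorProduct.map (TensorProduct.lift Hb.mul)
      (TensorProduct.comm k Hb.A Hb.A).toLinearMap
      (TensorProduct.tensorTensorTensorComm k Hb.A Hb.A Hb.A Hb.A
        (Hb.R α (-β) ⊗ₜ[k] Hb.R α β)) with hZdef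
  set W := TensorProduct.map (TensorProduct.lift Hb.mul) LinearMap.id
      (TensorProduct.tensorTensorTensorComm k Hb.A Hb.A Hb.A Hb.A
        (Hb.Pm α β ⊗ₜ[k] Hb.Pm α (-β))) with hWdef
  have m1 := Hb.Dmem3 β (Hb.Pm_mem α 0)
  have m2 := Hb.mem3_rc (Hb.R_mem2 α (-β)) (Hb.R_mem2 α β)
  rw [← hZdef] at m2
  have m3 := Hb.mem3_ri (Hb.Pm_mem α β) (Hb.Pm_mem α (-β))
  rw [← hWdef] at m3
  have hDR : TensorProduct.map LinearMap.id (Hb.comul β (-β)) (Hb.R α 0) = Z := by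
    have h := Hb.comul_R_right α β (-β); rwa [add_neg_cancel] at h
  have hMA : tmulMul Hb.mul (tmulMul Hb.mul Hb.mul)
      (TensorProduct.map LinearMap.id (Hb.comul β (-β)) (Hb.Pm α 0)) Z =
      Hb.one α ⊗ₜ[k] (Hb.one β ⊗ₜ[k] Hb.one (-β)) := by
    rw [← hDR, ← Hb.comul_mm β (Hb.Pm_mem α 0) (Hb.R_mem2 α 0), Hb.idA1 α 0]
    simp [hco]
  have hZW : tmulMul Hb.mul (tmulMul Hb.mul Hb.mul) Z W =
      Hb.one α ⊗ₜ[k] (Hb.one β ⊗ₜ[k] Hb.one (-β)) := by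
    rw [hZdef, hWdef]
    rw [Hb.G1 (Hb.R_mem2 α (-β)) (Hb.R_mem2 α β) (Hb.Pm_mem α β) (Hb.Pm_mem α (-β))]
    rw [Hb.idA1' α β]
    have h12 : TensorProduct.map LinearMap.id
        ((TensorProduct.mk k Hb.A Hb.A).flip (Hb.one (-β)))
        (Hb.one α ⊗ₜ[k] Hb.one β) = Hb.one α ⊗ₜ[k] (Hb.one β ⊗ₜ[k] Hb.one (-β)) := by
      simp
    rw [h12]
    rw [Hb.M3_one_l (Hb.mem3_i13 β (Hb.Pm_mem α (-β)))]
    rw [Hb.M3_i13_i13 β (Hb.R_mem2 α (-β)) (Hb.Pm_mem α (-β)), Hb.idA1' α (-β)]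
    simp
  have hDPW : TensorProduct.map LinearMap.id (Hb.comul β (-β)) (Hb.Pm α 0) = W := by
    calc TensorProduct.map LinearMap.id (Hb.comul β (-β)) (Hb.Pm α 0)
        = tmulMul Hb.mul (tmulMul Hb.mul Hb.mul)
            (TensorProduct.map LinearMap.id (Hb.comul β (-β)) (Hb.Pm α 0))
            (Hb.one α ⊗ₜ[k] (Hb.one β ⊗ₜ[k] Hb.one (-β))) := (Hb.M3_one_r m1).symm
      _ = tmulMul Hb.mul (tmulMul Hb.mul Hb.mul)
            (TensorProduct.map LinearMap.id (Hb.comul β (-β)) (Hb.Pm α 0))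
            (tmulMul Hb.mul (tmulMul Hb.mul Hb.mul) Z W) := by rw [hZW]
      _ = tmulMul Hb.mul (tmulMul Hb.mul Hb.mul)
            (tmulMul Hb.mul (tmulMul Hb.mul Hb.mul)
              (TensorProduct.map LinearMap.id (Hb.comul β (-β)) (Hb.Pm α 0)) Z) W :=
            (Hb.M3_assoc m1 m2 m3).symm
      _ = tmulMul Hb.mul (tmulMul Hb.mul Hb.mul)
            (Hb.one α ⊗ₜ[k] (Hb.one β ⊗ₜ[k] Hb.one (-β))) W := by rw [hMA]
      _ = W := Hb.M3_one_l m3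
  -- collapse with `m ∘ (id ⊗ S)` on the last two legs
  have hpoint : TensorProduct.map LinearMap.id ((TensorProduct.lift Hb.mul ∘ₗ
      TensorProduct.map LinearMap.id (Hb.S (-β) (⅟(2:G) * (-α)))) ∘ₗ Hb.comul β (-β))
        (Hb.Pm α 0) =
      TensorProduct.map LinearMap.id
        (LinearMap.smulRight (Hb.counit (⅟(2:G) * (-α))) (Hb.one β)) (Hb.Pm α 0) := by
    refine Hb.mapr_congr (Hb.Pm_mem α 0) ?_
    intro b hb
    simp only [LinearMap.coe_comp, Function.comp_apply, LinearMap.smulRight_apply]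
    exact Hb.antipode_right β (⅟(2:G) * (-α)) b hb
  have hL : TensorProduct.map LinearMap.id (TensorProduct.lift Hb.mul ∘ₗ
      TensorProduct.map LinearMap.id (Hb.S (-β) (⅟(2:G) * (-α))))
        (TensorProduct.map LinearMap.id (Hb.comul β (-β)) (Hb.Pm α 0)) =
      Hb.one α ⊗ₜ[k] Hb.one β := by
    rw [map_snd_snd, hpoint, map_smulRight_r]
    congr 1
    show TensorProduct.rid k Hb.A (TensorProduct.map LinearMap.id
      (Hb.counit (⅟(2:G) * (-α)))
      (TensorProduct.map (Hb.S (-α) (⅟(2:G) * 0)) LinearMap.id (Hb.R (-α) 0))) = Hb.one α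
    rw [rid_map_fst]
    have huA : TensorProduct.rid k Hb.A (TensorProduct.map LinearMap.id
        (Hb.counit (⅟(2:G) * (-α))) (Hb.R (-α) 0)) = Hb.uA (-α) := rfl
    rw [huA, Hb.u_one, show (⅟(2:G) * (0:G)) = (0:G) from mul_zero _, Hb.S_one, neg_neg]
  have hR : TensorProduct.map LinearMap.id (TensorProduct.lift Hb.mul ∘ₗ
      TensorProduct.map LinearMap.id (Hb.S (-β) (⅟(2:G) * (-α)))) W =
      tmulMul Hb.mul Hb.mul (Hb.Pm α β) (Hb.Tm α β) := by
    rw [hWdef, Hb.PL_W]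
    congr 1
    show TensorProduct.map LinearMap.id (Hb.S (-β) (⅟(2:G) * (-α)))
      (TensorProduct.map (Hb.S (-α) (⅟(2:G) * (-β))) LinearMap.id (Hb.R (-α) (-β))) =
      Hb.Tm α β
    rw [map_fst_snd]
    rfl
  calc tmulMul Hb.mul Hb.mul (Hb.Pm α β) (Hb.Tm α β)
      = TensorProduct.map LinearMap.id (TensorProduct.lift Hb.mul ∘ₗ
          TensorProduct.map LinearMap.id (Hb.S (-β) (⅟(2:G) * (-α)))) W := hR.symm
    _ = TensorProduct.map LinearMap.id (TensorProduct.lift Hb.mul ∘ₗ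
          TensorProduct.map LinearMap.id (Hb.S (-β) (⅟(2:G) * (-α))))
          (TensorProduct.map LinearMap.id (Hb.comul β (-β)) (Hb.Pm α 0)) := by rw [hDPW]
    _ = Hb.one α ⊗ₜ[k] Hb.one β := hL

/-- `(S ⊗ S)(R_{-α,-β}) = R_{α,β}`. -/
lemma Tm_eq_R (α β : G) : Hb.Tm α β = Hb.R α β := by
  calc Hb.Tm α β
      = tmulMul Hb.mul Hb.mul (Hb.one α ⊗ₜ[k] Hb.one β) (Hb.Tm α β) :=
        (Hb.mm_one_l (Hb.Tm_mem α β)).symm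
    _ = tmulMul Hb.mul Hb.mul (tmulMul Hb.mul Hb.mul (Hb.R α β) (Hb.Pm α β))
          (Hb.Tm α β) := by rw [Hb.idA1']
    _ = tmulMul Hb.mul Hb.mul (Hb.R α β)
          (tmulMul Hb.mul Hb.mul (Hb.Pm α β) (Hb.Tm α β)) :=
        Hb.mm_assoc (Hb.R_mem2 α β) (Hb.Pm_mem α β) (Hb.Tm_mem α β)
    _ = tmulMul Hb.mul Hb.mul (Hb.R α β) (Hb.one α ⊗ₜ[k] Hb.one β) := by rw [Hb.PT]
    _ = Hb.R α β := Hb.mm_one_r (Hb.R_mem2 α β)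

end RibbonHopfGBialgebra

/-- (R11): the antipode applied to both legs preserves the R-matrix up to sign change of
the indices: `(S_α^{β/2} ⊗ S_β^{α/2})(R_{α,β}) = R_{-α,-β}`. -/
theorem RibbonHopfGBialgebra.antipode_R {k G : Type*} [Field k] [CommRing G]
    [Invertible (2 : G)] (Hb : RibbonHopfGBialgebra k G) (α β : G) :
    (TensorProduct.map (Hb.S α (⅟(2 : G) * β)) (Hb.S β (⅟(2 : G) * α))) (Hb.R α β) =
      Hb.R (-α) (-β) := by
  have h := Hb.Tm_eq_R (-α) (-β)
  simp only [RibbonHopfGBialgebra.Tm, neg_neg] at h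
  exact h
end

section
/- Let H be a factorizable ribbon Hopf G-bialgebra with left integral λ and pivotal element g. Then λ is a 'quantum character' twisted by S²: λ_α(yz) = λ_α(z · S_{-α}^{-β}(S_α^β(y))) for all α, β ∈ G, y ∈ H_α^β, z ∈ H_α^{-β}. -/
open TensorProduct

/-- The Drinfeld map `D_{α,β}(f) = f((R''_i)(R'_j)) (R'_i)(R''_j)` built from the
R-matrices `R1 = R_{β,α}` (index `i`) and `R2 = R_{α,β}` (index `j`). -/
noncomputable def drinfeldMapAux {k A : Type*} [Field k] [AddCommGroup A] [Module k A]
    (mul : A →ₗ[k] A →ₗ[k] A) (f : A →ₗ[k] k) (R1 R2 : A ⊗[k] A) : A :=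
  (TensorProduct.lid k A)
    ((TensorProduct.map (f ∘ₗ TensorProduct.lift mul) (TensorProduct.lift mul))
      ((TensorProduct.tensorTensorTensorComm k A A A A)
        (((TensorProduct.comm k A A) R1) ⊗ₜ[k] R2)))

/-- A factorizable ribbon Hopf `G`-bialgebra: a ribbon Hopf `G`-bialgebra equipped with a
left integral `λ` and a two-sided cointegral `Λ` satisfying (I1)–(I5). -/
structure FactorizableRibbonHopfGBialgebra (k : Type*) (G : Type*) [Field k] [CommRing G]
    [Invertible (2 : G)] extends RibbonHopfGBialgebra k G where
  /-- the left integral `λ_α : H_α^0 → k` -/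
  intg : G → A →ₗ[k] k
  /-- the two-sided cointegral `Λ^α ∈ H_0^α` -/
  coint : G → A
  coint_mem : ∀ α : G, coint α ∈ H 0 α
  /-- (I1): `λ_β(x_{(2,β)}) x_{(1,α)} = λ_{α+β}(x) 1_α` -/
  intg_left : ∀ (α β : G) (x : A), x ∈ H (α + β) 0 →
    (TensorProduct.rid k A) ((TensorProduct.map LinearMap.id (intg β)) (comul α β x)) =
      intg (α + β) x • one α
  /-- (I2): `y Λ^β = ε^α(y) Λ^{α+β}` -/
  mul_coint : ∀ (α β : G) (y : A), y ∈ H 0 α →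
    mul y (coint β) = counit α y • coint (α + β)
  /-- (I3) -/
  S_coint : ∀ α : G, S 0 α (coint α) = coint (-α)
  /-- (I4) -/
  intg_coint : intg 0 (coint 0) = 1
  /-- (I5) factorizability: `D_{α,0}(λ_{-α} ∘ S_α^0) = Λ^α` -/
  factorizable : ∀ α : G,
    drinfeldMapAux mul ((intg (-α)) ∘ₗ (S α 0)) (R 0 α) (R α 0) = coint α

namespace FactorizableRibbonHopfGBialgebra

variable {k G : Type*} [Field k] [CommRing G] [Invertible (2 : G)]
  (Hb : FactorizableRibbonHopfGBialgebra k G)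

lemma exists_rep {p q : Submodule k Hb.A} {t : Hb.A ⊗[k] Hb.A}
    (h : t ∈ LinearMap.range (TensorProduct.map p.subtype q.subtype)) :
    ∃ (n : ℕ) (a b : Fin n → Hb.A), (∀ i, a i ∈ p) ∧ (∀ i, b i ∈ q) ∧
      t = ∑ i, a i ⊗ₜ[k] b i := by
  obtain ⟨u, rfl⟩ := h
  induction u with
  | zero => exact ⟨0, ![], ![], by simp, by simp, by simp⟩
  | tmul a b =>
      exact ⟨1, fun _ => (a : Hb.A), fun _ => (b : Hb.A),
        fun _ => a.2, fun _ => b.2, by simp⟩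
  | add u v hu hv =>
      obtain ⟨m, a₁, b₁, ha₁, hb₁, h₁⟩ := hu
      obtain ⟨n, a₂, b₂, ha₂, hb₂, h₂⟩ := hv
      refine ⟨m + n, Fin.append a₁ a₂, Fin.append b₁ b₂,
        Fin.addCases (by simpa using ha₁) (by simpa using ha₂),
        Fin.addCases (by simpa using hb₁) (by simpa using hb₂), ?_⟩
      rw [map_add, h₁, h₂, Fin.sum_univ_add]
      simp [Fin.append_left, Fin.append_right]

lemma comul_rep {α β γ : G} {x : Hb.A} (hx : x ∈ Hb.H (α + β) γ) :
    ∃ (n : ℕ) (a b : Fin n → Hb.A), (∀ i, a i ∈ Hb.H α γ) ∧ (∀ i, b i ∈ Hb.H β γ) ∧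
      Hb.comul α β x = ∑ i, a i ⊗ₜ[k] b i :=
  Hb.exists_rep (Hb.comul_mem hx)

noncomputable def mm : Hb.A ⊗[k] Hb.A →ₗ[k] Hb.A := TensorProduct.lift Hb.mul

@[simp] lemma mm_tmul (a b : Hb.A) : Hb.mm (a ⊗ₜ[k] b) = Hb.mul a b := rfl

@[simp] lemma tmulMul_tmul (a b c d : Hb.A) :
    tmulMul Hb.mul Hb.mul (a ⊗ₜ[k] b) (c ⊗ₜ[k] d) = Hb.mul a c ⊗ₜ[k] Hb.mul b d := by
  simp [tmulMul, TensorProduct.curry_apply]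

/-- (C): `S(w) = λ_γ(w Λ₍₂₎) Λ₍₁₎`. -/
lemma S_eq (γ δ : G) (w : Hb.A) (hw : w ∈ Hb.H γ δ) :
    Hb.S γ δ w = (TensorProduct.rid k Hb.A)
      ((TensorProduct.map LinearMap.id ((Hb.intg γ) ∘ₗ (Hb.mul w)))
        (Hb.comul (-γ) γ (Hb.coint (-δ)))) := by
  have hΛ : Hb.coint (-δ) ∈ Hb.H 0 (-δ) := Hb.coint_mem _
  have hΛ' : Hb.coint (-δ) ∈ Hb.H (-γ + γ) (-δ) := by rwa [neg_add_cancel]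
  obtain ⟨nP, P₁, P₂, hP₁, hP₂, hP⟩ := Hb.comul_rep hΛ'
  have hw0 : w ∈ Hb.H (γ + 0) δ := by rwa [add_zero]
  obtain ⟨n, w₁, w₂, hw₁, hw₂, hΔw⟩ := Hb.comul_rep hw0
  set J : Hb.A ⊗[k] Hb.A →ₗ[k] Hb.A :=
    (TensorProduct.rid k Hb.A).toLinearMap ∘ₗ
      (TensorProduct.map LinearMap.id (Hb.intg γ)) ∘ₗ
      ((tmulMul Hb.mul Hb.mul).flip (Hb.comul (-γ) γ (Hb.coint (-δ)))) with hJdef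
  have hJ : ∀ u v : Hb.A,
      J (u ⊗ₜ[k] v) = ∑ l, Hb.intg γ (Hb.mul v (P₂ l)) • Hb.mul u (P₁ l) := by
    intro u v
    simp only [hJdef, LinearMap.coe_comp, Function.comp_apply, LinearMap.flip_apply, hP]
    rw [map_sum (tmulMul Hb.mul Hb.mul (u ⊗ₜ[k] v))]
    simp [smul_tmul']
  set Ξ : Hb.A ⊗[k] (Hb.A ⊗[k] Hb.A) →ₗ[k] Hb.A :=
    J ∘ₗ (TensorProduct.map (Hb.mm ∘ₗ (TensorProduct.map (Hb.S γ δ) LinearMap.id))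
          LinearMap.id) ∘ₗ (TensorProduct.assoc k Hb.A Hb.A Hb.A).symm.toLinearMap with hΞdef
  have hΞ : ∀ a b c : Hb.A,
      Ξ (a ⊗ₜ[k] (b ⊗ₜ[k] c)) = J (Hb.mul (Hb.S γ δ a) b ⊗ₜ[k] c) := by
    intro a b c; simp [hΞdef]
  -- coassociativity
  have hwco : w ∈ Hb.H (γ + -γ + γ) δ := by
    have : γ + -γ + γ = γ := by abel
    rwa [this]
  have hco := Hb.coassoc γ (-γ) γ δ w hwco
  rw [add_neg_cancel, neg_add_cancel] at hco
  -- step 1 : S w = Ξ ((id ⊗ Δ)(Δ_{γ,0} w))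
  have key1 : ∀ i, Ξ (w₁ i ⊗ₜ[k] Hb.comul (-γ) γ (w₂ i))
      = Hb.counit δ (w₂ i) • Hb.S γ δ (w₁ i) := by
    intro i
    have hw₂' : w₂ i ∈ Hb.H (-γ + γ) δ := by rw [neg_add_cancel]; exact hw₂ i
    obtain ⟨m, a, b, ha, hb, hab⟩ := Hb.comul_rep hw₂'
    -- counit via cointegral
    have hcε : Hb.intg 0 (Hb.mul (w₂ i) (Hb.coint (-δ))) = Hb.counit δ (w₂ i) := by
      rw [Hb.mul_coint δ (-δ) _ (hw₂ i), map_smul, add_neg_cancel, Hb.intg_coint,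
        smul_eq_mul, mul_one]
    -- (I1) for w₂ i * Λ'
    have hmem : Hb.mul (w₂ i) (Hb.coint (-δ)) ∈ Hb.H (-γ + γ) 0 := by
      rw [neg_add_cancel]
      have := Hb.mul_mem (hw₂ i) hΛ
      rwa [add_neg_cancel] at this
    have hI1 := Hb.intg_left (-γ) γ _ hmem
    rw [neg_add_cancel] at hI1
    -- (H5)
    have h5 := Hb.comul_mul (-γ) γ δ (-δ) (w₂ i) (Hb.coint (-δ)) hw₂' hΛ'
    rw [h5, hab, hP] at hI1
    rw [hcε] at hI1
    -- compute the left side of hI1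
    have hI1' : (∑ j, ∑ l, Hb.intg γ (Hb.mul (b j) (P₂ l)) •
        Hb.mul (a j) (P₁ l)) = Hb.counit δ (w₂ i) • Hb.one (-γ) := by
      rw [← hI1]
      rw [sum_tmul]
      simp only [tmul_sum, map_sum]
      refine Finset.sum_congr rfl fun j _ => Finset.sum_congr rfl fun l _ => ?_
      simp [smul_tmul']
    -- now compute Ξ
    rw [hab, tmul_sum, map_sum]
    have : ∀ j, Ξ (w₁ i ⊗ₜ[k] (a j ⊗ₜ[k] b j))
        = ∑ l, Hb.intg γ (Hb.mul (b j) (P₂ l)) •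
            Hb.mul (Hb.S γ δ (w₁ i)) (Hb.mul (a j) (P₁ l)) := by
      intro j
      rw [hΞ, hJ]
      refine Finset.sum_congr rfl fun l _ => ?_
      rw [Hb.mul_assoc' (Hb.S_mem (hw₁ i)) (ha j) (hP₁ l)]
    rw [Finset.sum_congr rfl fun j _ => this j]
    calc (∑ j, ∑ l, Hb.intg γ (Hb.mul (b j) (P₂ l)) •
            Hb.mul (Hb.S γ δ (w₁ i)) (Hb.mul (a j) (P₁ l)))
        = Hb.mul (Hb.S γ δ (w₁ i)) (∑ j, ∑ l,
            Hb.intg γ (Hb.mul (b j) (P₂ l)) • Hb.mul (a j) (P₁ l)) := by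
          rw [map_sum]
          refine Finset.sum_congr rfl fun j _ => ?_
          rw [map_sum]
          refine Finset.sum_congr rfl fun l _ => ?_
          rw [map_smul]
      _ = Hb.mul (Hb.S γ δ (w₁ i)) (Hb.counit δ (w₂ i) • Hb.one (-γ)) := by rw [hI1']
      _ = Hb.counit δ (w₂ i) • Hb.S γ δ (w₁ i) := by
          rw [map_smul, Hb.mul_one' (Hb.S_mem (hw₁ i))]
  have step1 : Hb.S γ δ w
      = Ξ ((TensorProduct.map LinearMap.id (Hb.comul (-γ) γ)) (Hb.comul γ 0 w)) := by
    have hcc := Hb.comul_counit γ δ w hw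
    rw [hΔw] at hcc ⊢
    rw [map_sum] at hcc
    simp only [map_sum, TensorProduct.map_tmul, LinearMap.id_coe, id_eq,
      TensorProduct.rid_tmul] at hcc ⊢
    rw [Finset.sum_congr rfl fun i _ => key1 i]
    conv_lhs => rw [← hcc]
    rw [map_sum]
    exact Finset.sum_congr rfl fun i _ => map_smul _ _ _
  rw [step1, ← hco]
  have hw0' : w ∈ Hb.H (0 + γ) δ := by rwa [zero_add]
  obtain ⟨m', Q, w₃, hQ, hw₃, hΔ'⟩ := Hb.comul_rep hw0'
  have hccQ := Hb.counit_comul γ δ w hw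
  rw [hΔ'] at hccQ
  simp only [map_sum, TensorProduct.map_tmul, LinearMap.id_coe, id_eq,
    TensorProduct.lid_tmul] at hccQ
  have key2 : ∀ m : Fin m', Ξ ((TensorProduct.assoc k Hb.A Hb.A Hb.A)
      ((TensorProduct.map (Hb.comul γ (-γ)) LinearMap.id) (Q m ⊗ₜ[k] w₃ m)))
      = Hb.counit δ (Q m) • J (Hb.one (-γ) ⊗ₜ[k] w₃ m) := by
    intro m
    have hQ' : Q m ∈ Hb.H (γ + -γ) δ := by rw [add_neg_cancel]; exact hQ m
    obtain ⟨mq, q₁, q₂, hq₁, hq₂, hq⟩ := Hb.comul_rep hQ'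
    have hanti := Hb.antipode_left (-γ) δ (Q m) (hQ m)
    rw [neg_neg, hq, map_sum, map_sum] at hanti
    simp only [TensorProduct.map_tmul, LinearMap.id_coe, id_eq,
      TensorProduct.lift.tmul] at hanti
    simp only [TensorProduct.map_tmul, LinearMap.id_coe, id_eq]
    rw [hq, sum_tmul, map_sum, map_sum]
    have : ∀ jq, Ξ ((TensorProduct.assoc k Hb.A Hb.A Hb.A) ((q₁ jq ⊗ₜ[k] q₂ jq) ⊗ₜ[k] w₃ m))
        = J (Hb.mul (Hb.S γ δ (q₁ jq)) (q₂ jq) ⊗ₜ[k] w₃ m) := by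
      intro jq
      rw [TensorProduct.assoc_tmul, hΞ]
    rw [Finset.sum_congr rfl fun jq _ => this jq, ← map_sum, ← sum_tmul, hanti,
      ← smul_tmul', map_smul]
  rw [hΔ', map_sum, map_sum, map_sum, Finset.sum_congr rfl fun m _ => key2 m]
  have hfin : ∑ m, Hb.counit δ (Q m) • J (Hb.one (-γ) ⊗ₜ[k] w₃ m)
      = J (Hb.one (-γ) ⊗ₜ[k] w) := by
    rw [← hccQ, tmul_sum, map_sum]
    exact Finset.sum_congr rfl fun m _ => by rw [tmul_smul, map_smul]
  rw [hfin, hJ, hP]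
  simp only [map_sum, TensorProduct.map_tmul, LinearMap.id_coe, id_eq,
    LinearMap.coe_comp, Function.comp_apply, TensorProduct.rid_tmul]
  exact Finset.sum_congr rfl fun l _ => by rw [Hb.one_mul' (hP₁ l)]

lemma tmul_mem_range {p q : Submodule k Hb.A} {m n : Hb.A} (hm : m ∈ p) (hn : n ∈ q) :
    m ⊗ₜ[k] n ∈ LinearMap.range (TensorProduct.map p.subtype q.subtype) :=
  ⟨(⟨m, hm⟩ : p) ⊗ₜ[k] (⟨n, hn⟩ : q), by simp⟩

lemma tmulMul_eq (t s : Hb.A ⊗[k] Hb.A) :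
    tmulMul Hb.mul Hb.mul t s = (TensorProduct.map (TensorProduct.lift Hb.mul)
      (TensorProduct.lift Hb.mul))
      ((TensorProduct.tensorTensorTensorComm k Hb.A Hb.A Hb.A Hb.A) (t ⊗ₜ[k] s)) := rfl

/-- associativity of the componentwise product on graded tensors -/
lemma tm_assoc {α γ a₁ a₂ b₁ b₂ c₁ c₂ : G} {t s r : Hb.A ⊗[k] Hb.A}
    (ht : t ∈ LinearMap.range (TensorProduct.map (Hb.H α a₁).subtype (Hb.H γ a₂).subtype))
    (hs : s ∈ LinearMap.range (TensorProduct.map (Hb.H α b₁).subtype (Hb.H γ b₂).subtype))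
    (hr : r ∈ LinearMap.range (TensorProduct.map (Hb.H α c₁).subtype (Hb.H γ c₂).subtype)) :
    tmulMul Hb.mul Hb.mul (tmulMul Hb.mul Hb.mul t s) r
      = tmulMul Hb.mul Hb.mul t (tmulMul Hb.mul Hb.mul s r) := by
  obtain ⟨nt, t₁, t₂, ht₁, ht₂, rfl⟩ := Hb.exists_rep ht
  obtain ⟨ns, s₁, s₂, hs₁, hs₂, rfl⟩ := Hb.exists_rep hs
  obtain ⟨nr, r₁, r₂, hr₁, hr₂, rfl⟩ := Hb.exists_rep hr
  simp only [map_sum, LinearMap.sum_apply, tmulMul_tmul]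
  refine Finset.sum_congr rfl fun i _ => Finset.sum_congr rfl fun j _ =>
    Finset.sum_congr rfl fun l _ => ?_
  rw [Hb.mul_assoc' (ht₁ l) (hs₁ j) (hr₁ i), Hb.mul_assoc' (ht₂ l) (hs₂ j) (hr₂ i)]

section AntiComul

variable (ρ δ : G)

/-- `Δ ∗ (Δ ∘ S) = η ∘ ε` -/
lemma conv_K2 (u : Hb.A) (hu : u ∈ Hb.H 0 δ) :
    TensorProduct.lift (((tmulMul Hb.mul Hb.mul) ∘ₗ (Hb.comul (-ρ) ρ)).compl₂
        ((Hb.comul (-ρ) ρ) ∘ₗ (Hb.S 0 δ))) (Hb.comul 0 0 u)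
      = Hb.counit δ u • (Hb.one (-ρ) ⊗ₜ[k] Hb.one ρ) := by
  have hu' : u ∈ Hb.H (0 + 0) δ := by rwa [add_zero]
  obtain ⟨n, u₁, u₂, hu₁, hu₂, hΔ⟩ := Hb.comul_rep hu'
  have hanti := Hb.antipode_right 0 δ u hu
  rw [neg_zero, hΔ, map_sum] at hanti
  simp only [TensorProduct.map_tmul, LinearMap.id_coe, id_eq, map_sum,
    TensorProduct.lift.tmul] at hanti
  rw [hΔ, map_sum]
  have key : ∀ i, TensorProduct.lift (((tmulMul Hb.mul Hb.mul) ∘ₗ (Hb.comul (-ρ) ρ)).compl₂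
      ((Hb.comul (-ρ) ρ) ∘ₗ (Hb.S 0 δ))) (u₁ i ⊗ₜ[k] u₂ i)
      = Hb.comul (-ρ) ρ (Hb.mul (u₁ i) (Hb.S 0 δ (u₂ i))) := by
    intro i
    have hm1 : u₁ i ∈ Hb.H (-ρ + ρ) δ := by rw [neg_add_cancel]; exact hu₁ i
    have hm2 : Hb.S 0 δ (u₂ i) ∈ Hb.H (-ρ + ρ) (-δ) := by
      rw [neg_add_cancel]
      have := Hb.S_mem (hu₂ i); rwa [neg_zero] at this
    rw [Hb.comul_mul (-ρ) ρ δ (-δ) _ _ hm1 hm2]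
    simp only [TensorProduct.lift.tmul, LinearMap.compl₂_apply, LinearMap.coe_comp,
      Function.comp_apply]
    rw [tmulMul_eq]
  rw [Finset.sum_congr rfl fun i _ => key i, ← map_sum, hanti, map_smul]
  have h1 : Hb.one 0 = Hb.one (-ρ + ρ) := by rw [neg_add_cancel]
  rw [h1, Hb.comul_one]

/-- `((S ⊗ S) ∘ τ ∘ Δ) ∗ Δ = η ∘ ε` -/
lemma conv_K1 (u : Hb.A) (hu : u ∈ Hb.H 0 δ) :
    TensorProduct.lift (((tmulMul Hb.mul Hb.mul) ∘ₗ
        ((TensorProduct.map (Hb.S ρ δ) (Hb.S (-ρ) δ)) ∘ₗ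
          (TensorProduct.comm k Hb.A Hb.A).toLinearMap ∘ₗ (Hb.comul (-ρ) ρ))).compl₂
        (Hb.comul (-ρ) ρ)) (Hb.comul 0 0 u)
      = Hb.counit δ u • (Hb.one (-ρ) ⊗ₜ[k] Hb.one ρ) := by
  set Gd := Hb.comul (-ρ) ρ with hGd
  set Ψ : (Hb.A ⊗[k] Hb.A) ⊗[k] (Hb.A ⊗[k] Hb.A) →ₗ[k] Hb.A ⊗[k] Hb.A :=
    (TensorProduct.map Hb.mm Hb.mm) ∘ₗ
      (TensorProduct.tensorTensorTensorComm k Hb.A Hb.A Hb.A Hb.A).toLinearMap ∘ₗ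
      (TensorProduct.map ((TensorProduct.comm k Hb.A Hb.A).toLinearMap ∘ₗ
        (TensorProduct.map (Hb.S (-ρ) δ) (Hb.S ρ δ))) LinearMap.id) with hΨ
  have hΨp : ∀ a b c d : Hb.A, Ψ ((a ⊗ₜ[k] b) ⊗ₜ[k] (c ⊗ₜ[k] d))
      = (Hb.mul (Hb.S ρ δ b) c) ⊗ₜ[k] (Hb.mul (Hb.S (-ρ) δ a) d) := by
    intro a b c d
    simp [hΨ, TensorProduct.tensorTensorTensorComm_tmul]
  set Ψ₂ : (Hb.A ⊗[k] Hb.A) ⊗[k] Hb.A →ₗ[k] Hb.A ⊗[k] Hb.A :=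
    Ψ ∘ₗ (TensorProduct.map LinearMap.id Gd) with hΨ₂
  set Ω : Hb.A ⊗[k] (Hb.A ⊗[k] (Hb.A ⊗[k] Hb.A)) →ₗ[k] Hb.A ⊗[k] Hb.A :=
    Ψ ∘ₗ (TensorProduct.assoc k Hb.A Hb.A (Hb.A ⊗[k] Hb.A)).symm.toLinearMap with hΩ
  -- step A1 : the convolution equals `Ψ₂ ((Δ ⊗ id) (Δ u))`
  have hu00 : u ∈ Hb.H (0 + 0) δ := by rwa [add_zero]
  obtain ⟨n, v₁, v₂, hv₁, hv₂, hΔ⟩ := Hb.comul_rep hu00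
  have A1 : TensorProduct.lift (((tmulMul Hb.mul Hb.mul) ∘ₗ
        ((TensorProduct.map (Hb.S ρ δ) (Hb.S (-ρ) δ)) ∘ₗ
          (TensorProduct.comm k Hb.A Hb.A).toLinearMap ∘ₗ Gd)).compl₂ Gd) (Hb.comul 0 0 u)
      = Ψ₂ ((TensorProduct.map Gd LinearMap.id) (Hb.comul 0 0 u)) := by
    rw [hΔ]
    simp only [map_sum]
    refine Finset.sum_congr rfl fun i _ => ?_
    have hm1 : v₁ i ∈ Hb.H (-ρ + ρ) δ := by rw [neg_add_cancel]; exact hv₁ i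
    have hm2 : v₂ i ∈ Hb.H (-ρ + ρ) δ := by rw [neg_add_cancel]; exact hv₂ i
    obtain ⟨na, a, b, ha, hb, hab⟩ := Hb.comul_rep hm1
    obtain ⟨nc, c, d, hc, hd, hcd⟩ := Hb.comul_rep hm2
    simp only [TensorProduct.lift.tmul, LinearMap.compl₂_apply, LinearMap.coe_comp,
      Function.comp_apply, TensorProduct.map_tmul, LinearMap.id_coe, id_eq, hΨ₂]
    rw [hab, hcd]
    simp only [map_sum, LinearEquiv.coe_coe, TensorProduct.comm_tmul,
      TensorProduct.map_tmul, sum_tmul, tmul_sum, LinearMap.sum_apply]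
    refine Finset.sum_congr rfl fun j _ => Finset.sum_congr rfl fun l _ => ?_
    rw [hΨp, tmulMul_tmul]
  rw [A1]
  -- step A2 : reassociate twice and collapse
  have humem : u ∈ Hb.H (-ρ + ρ + 0) δ := by
    have : -ρ + ρ + 0 = (0 : G) := by abel
    rwa [this]
  have hco1 := Hb.coassoc (-ρ) ρ 0 δ u humem
  rw [neg_add_cancel, add_zero] at hco1
  have e1 : (TensorProduct.map Gd LinearMap.id) (Hb.comul 0 0 u)
      = (TensorProduct.assoc k Hb.A Hb.A Hb.A).symm
          ((TensorProduct.map LinearMap.id (Hb.comul ρ 0)) (Hb.comul (-ρ) ρ u)) := by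
    rw [← hco1, LinearEquiv.symm_apply_apply]
  rw [e1]
  have hu' : u ∈ Hb.H (-ρ + ρ) δ := by rwa [neg_add_cancel]
  obtain ⟨nX, u₁, X, hu₁, hX, hΔX⟩ := Hb.comul_rep hu'
  rw [hΔX, map_sum, map_sum, map_sum]
  -- antipode collapse for u
  have hantiu := Hb.antipode_left ρ δ u hu
  rw [hΔX, map_sum] at hantiu
  simp only [TensorProduct.map_tmul, LinearMap.id_coe, id_eq, map_sum,
    TensorProduct.lift.tmul] at hantiu
  have key : ∀ i, Ψ₂ ((TensorProduct.assoc k Hb.A Hb.A Hb.A).symm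
      (u₁ i ⊗ₜ[k] Hb.comul ρ 0 (X i)))
      = Hb.one (-ρ) ⊗ₜ[k] (Hb.mul (Hb.S (-ρ) δ (u₁ i)) (X i)) := by
    intro i
    have hXmem : X i ∈ Hb.H (ρ + 0) δ := by rw [add_zero]; exact hX i
    obtain ⟨na, a, b, ha, hb, hab⟩ := Hb.comul_rep hXmem
    -- rewrite to Ω form
    have eΩ : Ψ₂ ((TensorProduct.assoc k Hb.A Hb.A Hb.A).symm
        (u₁ i ⊗ₜ[k] Hb.comul ρ 0 (X i)))
        = Ω (u₁ i ⊗ₜ[k] ((TensorProduct.map LinearMap.id Gd) (Hb.comul ρ 0 (X i)))) := by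
      rw [hab]
      simp only [map_sum, tmul_sum, hΨ₂, hΩ, LinearMap.coe_comp, Function.comp_apply,
        LinearEquiv.coe_coe, TensorProduct.assoc_symm_tmul, TensorProduct.map_tmul,
        LinearMap.id_coe, id_eq]
    rw [eΩ]
    -- second coassociativity, for X i
    have hXmem2 : X i ∈ Hb.H (ρ + -ρ + ρ) δ := by
      have : ρ + -ρ + ρ = ρ := by abel
      rw [this]; exact hX i
    have hco2 := Hb.coassoc ρ (-ρ) ρ δ (X i) hXmem2
    rw [add_neg_cancel, neg_add_cancel] at hco2
    rw [← hco2]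
    have hXmem0 : X i ∈ Hb.H (0 + ρ) δ := by rw [zero_add]; exact hX i
    obtain ⟨nQ, Q, x₄, hQ, hx₄, hQx⟩ := Hb.comul_rep hXmem0
    -- counit collapse for X i
    have hcc := Hb.counit_comul ρ δ (X i) (hX i)
    rw [hQx, map_sum] at hcc
    simp only [TensorProduct.map_tmul, LinearMap.id_coe, id_eq,
      TensorProduct.lid_tmul] at hcc
    rw [hQx, map_sum, map_sum, tmul_sum, map_sum]
    have key2 : ∀ m, Ω (u₁ i ⊗ₜ[k] (TensorProduct.assoc k Hb.A Hb.A Hb.A)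
        ((TensorProduct.map (Hb.comul ρ (-ρ)) LinearMap.id) (Q m ⊗ₜ[k] x₄ m)))
        = Hb.counit δ (Q m) • (Hb.one (-ρ) ⊗ₜ[k] (Hb.mul (Hb.S (-ρ) δ (u₁ i)) (x₄ m))) := by
      intro m
      have hQ' : Q m ∈ Hb.H (ρ + -ρ) δ := by rw [add_neg_cancel]; exact hQ m
      obtain ⟨nq, q₁, q₂, hq₁, hq₂, hq⟩ := Hb.comul_rep hQ'
      have hanti := Hb.antipode_left (-ρ) δ (Q m) (hQ m)
      rw [neg_neg, hq, map_sum, map_sum] at hanti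
      simp only [TensorProduct.map_tmul, LinearMap.id_coe, id_eq,
        TensorProduct.lift.tmul] at hanti
      simp only [TensorProduct.map_tmul, LinearMap.id_coe, id_eq]
      rw [hq, sum_tmul, map_sum, tmul_sum, map_sum]
      have : ∀ jq, Ω (u₁ i ⊗ₜ[k] (TensorProduct.assoc k Hb.A Hb.A Hb.A)
          ((q₁ jq ⊗ₜ[k] q₂ jq) ⊗ₜ[k] x₄ m))
          = (Hb.mul (Hb.S ρ δ (q₁ jq)) (q₂ jq)) ⊗ₜ[k]
              (Hb.mul (Hb.S (-ρ) δ (u₁ i)) (x₄ m)) := by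
        intro jq
        rw [TensorProduct.assoc_tmul]
        simp only [hΩ, LinearMap.coe_comp, Function.comp_apply, LinearEquiv.coe_coe,
          TensorProduct.assoc_symm_tmul]
        rw [hΨp]
      rw [Finset.sum_congr rfl fun jq _ => this jq, ← sum_tmul, hanti, ← smul_tmul']
    rw [Finset.sum_congr rfl fun m _ => key2 m]
    conv_rhs => rw [← hcc]
    simp only [map_sum, map_smul, tmul_sum, tmul_smul, TensorProduct.lid_tmul]
  simp only [TensorProduct.map_tmul, LinearMap.id_coe, id_eq]
  rw [Finset.sum_congr rfl fun i _ => key i, ← tmul_sum, hantiu, tmul_smul]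

lemma tm_one {b₁ b₂ : G} {t : Hb.A ⊗[k] Hb.A}
    (ht : t ∈ LinearMap.range (TensorProduct.map (Hb.H (-ρ) b₁).subtype (Hb.H ρ b₂).subtype)) :
    tmulMul Hb.mul Hb.mul t (Hb.one (-ρ) ⊗ₜ[k] Hb.one ρ) = t := by
  obtain ⟨n, a, b, ha, hb, rfl⟩ := Hb.exists_rep ht
  simp only [map_sum, LinearMap.sum_apply, tmulMul_tmul]
  exact Finset.sum_congr rfl fun i _ => by
    rw [Hb.mul_one' (ha i), Hb.mul_one' (hb i)]

lemma one_tm {b₁ b₂ : G} {t : Hb.A ⊗[k] Hb.A}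
    (ht : t ∈ LinearMap.range (TensorProduct.map (Hb.H (-ρ) b₁).subtype (Hb.H ρ b₂).subtype)) :
    tmulMul Hb.mul Hb.mul (Hb.one (-ρ) ⊗ₜ[k] Hb.one ρ) t = t := by
  obtain ⟨n, a, b, ha, hb, rfl⟩ := Hb.exists_rep ht
  rw [map_sum]
  simp only [tmulMul_tmul]
  exact Finset.sum_congr rfl fun i _ => by
    rw [Hb.one_mul' (ha i), Hb.one_mul' (hb i)]

/-- anticomultiplicativity of the antipode on the `H 0 •` row -/
lemma comul_S (x : Hb.A) (hx : x ∈ Hb.H 0 δ) :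
    Hb.comul (-ρ) ρ (Hb.S 0 δ x)
      = (TensorProduct.map (Hb.S ρ δ) (Hb.S (-ρ) δ))
          ((TensorProduct.comm k Hb.A Hb.A) (Hb.comul (-ρ) ρ x)) := by
  set Gd := Hb.comul (-ρ) ρ with hGd
  set F : Hb.A →ₗ[k] Hb.A ⊗[k] Hb.A :=
    (TensorProduct.map (Hb.S ρ δ) (Hb.S (-ρ) δ)) ∘ₗ
      (TensorProduct.comm k Hb.A Hb.A).toLinearMap ∘ₗ Gd with hF
  set GS : Hb.A →ₗ[k] Hb.A ⊗[k] Hb.A := Gd ∘ₗ Hb.S 0 δ with hGS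
  suffices h : F x = GS x by
    have := h.symm
    simpa [hF, hGS, hGd] using this
  set tm := tmulMul Hb.mul Hb.mul with htm
  -- membership facts
  have hFmem : ∀ w, w ∈ Hb.H 0 δ → F w ∈ LinearMap.range
      (TensorProduct.map (Hb.H (-ρ) (-δ)).subtype (Hb.H ρ (-δ)).subtype) := by
    intro w hw
    have hw' : w ∈ Hb.H (-ρ + ρ) δ := by rwa [neg_add_cancel]
    obtain ⟨n, a, b, ha, hb, hab⟩ := Hb.comul_rep hw'
    simp only [hF, hGd, LinearMap.coe_comp, Function.comp_apply, LinearEquiv.coe_coe, hab,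
      map_sum, TensorProduct.comm_tmul, TensorProduct.map_tmul]
    refine Submodule.sum_mem _ fun i _ => ?_
    have h2 := Hb.S_mem (ha i)
    rw [neg_neg] at h2
    exact Hb.tmul_mem_range (Hb.S_mem (hb i)) h2
  have hGdmem : ∀ w, w ∈ Hb.H 0 δ → Gd w ∈ LinearMap.range
      (TensorProduct.map (Hb.H (-ρ) δ).subtype (Hb.H ρ δ).subtype) := by
    intro w hw
    have hw' : w ∈ Hb.H (-ρ + ρ) δ := by rwa [neg_add_cancel]
    exact Hb.comul_mem hw'
  have hGSmem : ∀ w, w ∈ Hb.H 0 δ → GS w ∈ LinearMap.range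
      (TensorProduct.map (Hb.H (-ρ) (-δ)).subtype (Hb.H ρ (-δ)).subtype) := by
    intro w hw
    have hw' : Hb.S 0 δ w ∈ Hb.H (-ρ + ρ) (-δ) := by
      rw [neg_add_cancel]
      have := Hb.S_mem hw; rwa [neg_zero] at this
    exact Hb.comul_mem hw'
  -- representation of Δ₀₀ x
  have hx00 : x ∈ Hb.H (0 + 0) δ := by rwa [add_zero]
  obtain ⟨n, x₁, x₂, hx₁, hx₂, hΔ⟩ := Hb.comul_rep hx00
  -- the two counit collapses
  have hccR := Hb.comul_counit 0 δ x hx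
  rw [hΔ] at hccR
  simp only [map_sum, TensorProduct.map_tmul, LinearMap.id_coe, id_eq,
    TensorProduct.rid_tmul] at hccR
  have hccL := Hb.counit_comul 0 δ x hx
  rw [hΔ] at hccL
  simp only [map_sum, TensorProduct.map_tmul, LinearMap.id_coe, id_eq,
    TensorProduct.lid_tmul] at hccL
  -- the big evaluation map
  set E1 : Hb.A ⊗[k] Hb.A →ₗ[k] Hb.A ⊗[k] Hb.A :=
    TensorProduct.lift ((tm ∘ₗ F).compl₂ Gd) with hE1
  set Ξ : (Hb.A ⊗[k] Hb.A) ⊗[k] Hb.A →ₗ[k] Hb.A ⊗[k] Hb.A :=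
    TensorProduct.lift ((tm ∘ₗ E1).compl₂ GS) with hΞ
  -- step 1 : F x = ∑ i, tm (F (x₁ i)) (conv (x₂ i))
  have step1 : F x = ∑ i, tm (F (x₁ i))
      (TensorProduct.lift ((tm ∘ₗ Gd).compl₂ GS) (Hb.comul 0 0 (x₂ i))) := by
    have : ∀ i, TensorProduct.lift ((tm ∘ₗ Gd).compl₂ GS) (Hb.comul 0 0 (x₂ i))
        = Hb.counit δ (x₂ i) • (Hb.one (-ρ) ⊗ₜ[k] Hb.one ρ) :=
      fun i => Hb.conv_K2 ρ δ (x₂ i) (hx₂ i)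
    rw [Finset.sum_congr rfl fun i _ => by rw [this i]]
    conv_lhs => rw [← hccR]
    rw [map_sum]
    refine Finset.sum_congr rfl fun i _ => ?_
    rw [map_smul, map_smul, htm, Hb.tm_one ρ (hFmem _ (hx₁ i))]
  -- step 2 : rewrite as Ξ applied to the reassociated triple coproduct
  have step2 : (∑ i, tm (F (x₁ i))
      (TensorProduct.lift ((tm ∘ₗ Gd).compl₂ GS) (Hb.comul 0 0 (x₂ i))))
      = Ξ ((TensorProduct.assoc k Hb.A Hb.A Hb.A).symm
          ((TensorProduct.map LinearMap.id (Hb.comul 0 0)) (Hb.comul 0 0 x))) := by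
    rw [hΔ]
    simp only [map_sum]
    refine Finset.sum_congr rfl fun i _ => ?_
    have hx₂00 : x₂ i ∈ Hb.H (0 + 0) δ := by rw [add_zero]; exact hx₂ i
    obtain ⟨m, c, d, hc, hd, hcd⟩ := Hb.comul_rep hx₂00
    simp only [TensorProduct.map_tmul, LinearMap.id_coe, id_eq]
    rw [hcd]
    simp only [map_sum, tmul_sum, LinearMap.sum_apply]
    refine Finset.sum_congr rfl fun j _ => ?_
    simp only [hΞ, TensorProduct.lift.tmul, LinearMap.compl₂_apply, LinearMap.coe_comp,
      Function.comp_apply, TensorProduct.assoc_symm_tmul, LinearEquiv.coe_coe]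
    have hE1v : E1 (x₁ i ⊗ₜ[k] c j) = tm (F (x₁ i)) (Gd (c j)) := by
      simp [hE1]
    rw [hE1v, htm]
    exact (Hb.tm_assoc (hFmem _ (hx₁ i)) (hGdmem _ (hc j)) (hGSmem _ (hd j))).symm
  -- step 3 : coassociativity
  have hx000 : x ∈ Hb.H (0 + 0 + 0) δ := by simpa using hx
  have hco := Hb.coassoc 0 0 0 δ x hx000
  simp only [add_zero, zero_add] at hco
  have step3 : Ξ ((TensorProduct.assoc k Hb.A Hb.A Hb.A).symm
      ((TensorProduct.map LinearMap.id (Hb.comul 0 0)) (Hb.comul 0 0 x)))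
      = Ξ ((TensorProduct.map (Hb.comul 0 0) LinearMap.id) (Hb.comul 0 0 x)) := by
    rw [← hco, LinearEquiv.symm_apply_apply]
  -- step 4 : collapse with conv_K1
  have step4 : Ξ ((TensorProduct.map (Hb.comul 0 0) LinearMap.id) (Hb.comul 0 0 x))
      = GS x := by
    rw [hΔ]
    simp only [map_sum, TensorProduct.map_tmul, LinearMap.id_coe, id_eq]
    have key : ∀ i, Ξ (Hb.comul 0 0 (x₁ i) ⊗ₜ[k] x₂ i)
        = Hb.counit δ (x₁ i) • GS (x₂ i) := by
      intro i
      have h1 : x₁ i ∈ Hb.H (0 + 0) δ := by rw [add_zero]; exact hx₁ i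
      obtain ⟨m, p, q, hp, hq, hpq⟩ := Hb.comul_rep h1
      rw [hpq, sum_tmul, map_sum]
      simp only [hΞ, TensorProduct.lift.tmul, LinearMap.compl₂_apply, LinearMap.coe_comp,
        Function.comp_apply]
      have hsumE : (∑ j, E1 (p j ⊗ₜ[k] q j))
          = Hb.counit δ (x₁ i) • (Hb.one (-ρ) ⊗ₜ[k] Hb.one ρ) := by
        rw [← map_sum, ← hpq, hE1, htm, hF, hGd]
        exact Hb.conv_K1 ρ δ (x₁ i) (hx₁ i)
      have hsum : tm (∑ j, E1 (p j ⊗ₜ[k] q j)) (GS (x₂ i))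
          = ∑ j, tm (E1 (p j ⊗ₜ[k] q j)) (GS (x₂ i)) := by
        rw [map_sum, LinearMap.sum_apply]
      rw [← hsum, hsumE, map_smul, LinearMap.smul_apply, htm,
        Hb.one_tm ρ (hGSmem _ (hx₂ i))]
    rw [Finset.sum_congr rfl fun i _ => key i]
    conv_rhs => rw [← hccL]
    rw [map_sum]
    exact Finset.sum_congr rfl fun i _ => (map_smul _ _ _).symm
  rw [step1, step2, step3, step4]

end AntiComul

end FactorizableRibbonHopfGBialgebra

/-- (I7): the left integral of a factorizable ribbon Hopf `G`-bialgebra is a quantum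
character twisted by `S²`: `λ_α(yz) = λ_α(z S_{-α}^{-β}(S_α^β(y)))` for `y ∈ H_α^β`,
`z ∈ H_α^{-β}`. -/
theorem FactorizableRibbonHopfGBialgebra.intg_quantum_character {k G : Type*} [Field k]
    [CommRing G] [Invertible (2 : G)] (Hb : FactorizableRibbonHopfGBialgebra k G)
    (α β : G) (y z : Hb.A) (hy : y ∈ Hb.H α β) (hz : z ∈ Hb.H α (-β)) :
    Hb.intg α (Hb.mul y z) = Hb.intg α (Hb.mul z (Hb.S (-α) (-β) (Hb.S α β y))) := by
  have hcm : Hb.coint (-β) ∈ Hb.H (-α + α) (-β) := by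
    rw [neg_add_cancel]; exact Hb.coint_mem _
  obtain ⟨n, N₁, N₂, hN₁, hN₂, hN⟩ := Hb.comul_rep hcm
  have hLS := Hb.comul_S α (-β) (Hb.coint (-β)) (Hb.coint_mem _)
  rw [Hb.S_coint, neg_neg, hN] at hLS
  simp only [map_sum, LinearEquiv.coe_coe, TensorProduct.comm_tmul,
    TensorProduct.map_tmul] at hLS
  have hSy := Hb.S_eq α β y hy
  rw [hN] at hSy
  simp only [map_sum, TensorProduct.map_tmul, LinearMap.id_coe, id_eq, LinearMap.coe_comp,
    Function.comp_apply, TensorProduct.rid_tmul] at hSy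
  have hSz := Hb.S_eq α (-β) z hz
  rw [neg_neg, hLS] at hSz
  simp only [map_sum, TensorProduct.map_tmul, LinearMap.id_coe, id_eq, LinearMap.coe_comp,
    Function.comp_apply, TensorProduct.rid_tmul] at hSz
  have hzeq : z = ∑ j, Hb.intg α (Hb.mul z (Hb.S (-α) (-β) (N₁ j))) • N₂ j := by
    have h0 := Hb.Sinv_S α (-β) z hz
    rw [hSz] at h0
    conv_lhs => rw [← h0]
    rw [map_sum]
    refine Finset.sum_congr rfl fun j _ => ?_
    rw [map_smul, Hb.Sinv_S α (-β) _ (hN₂ j)]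
  calc Hb.intg α (Hb.mul y z)
      = ∑ j, Hb.intg α (Hb.mul z (Hb.S (-α) (-β) (N₁ j)))
          * Hb.intg α (Hb.mul y (N₂ j)) := by
        conv_lhs => rw [hzeq]
        rw [map_sum, map_sum]
        refine Finset.sum_congr rfl fun j _ => ?_
        rw [map_smul, map_smul, smul_eq_mul]
    _ = Hb.intg α (Hb.mul z (Hb.S (-α) (-β) (Hb.S α β y))) := by
        rw [hSy, map_sum, map_sum, map_sum]
        refine Finset.sum_congr rfl fun j _ => ?_
        rw [map_smul, map_smul, map_smul, smul_eq_mul, mul_comm]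
end
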